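/- arXiv:1612.05232 — 5 statements merged into one kernel-verified Lean document; each statement's English description precedes it below -/
import Mathlib

section
/- For all integers n ≥ 2 and k ≥ 1, ζ({n}_k) = Σ_{j=0}^{k} 2^{−nj} · ζ({n}_j) · t({n}_{k−j}), with the conventions ζ({n}_0) = t({n}_0) = 1. (Equivalently, the generating functions T_n(x) = 1 + Σ_{k≥1} t({n}_k) x^{kn} and Z_n(x) = 1 + Σ_{k≥1} ζ({n}_k) x^{kn} satisfy T_n(x) = Z_n(x)/Z_n(x/2).) -/
open Finset
open scoped ENNReal NNReal

/-- Multiple t-value: sum over strictly decreasing tuples of odd positive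
integers.  For `k = 0` this equals `1` (empty product over the unique empty
tuple), matching the convention `t({n}_0) = 1`. -/
noncomputable def multT {k : ℕ} (a : Fin k → ℕ) : ℝ :=
  ∑' n : {f : Fin k → ℕ // StrictAnti f ∧ ∀ i, Odd (f i)},
    ∏ i, 1 / ((n.1 i : ℝ) ^ (a i))

/-- Multiple zeta value: sum over strictly decreasing tuples of positive
integers.  For `k = 0` this equals `1`, matching the convention
`ζ({n}_0) = 1`. -/
noncomputable def multZeta {k : ℕ} (a : Fin k → ℕ) : ℝ :=
  ∑' n : {f : Fin k → ℕ // StrictAnti f ∧ ∀ i, 0 < f i},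
    ∏ i, 1 / ((n.1 i : ℝ) ^ (a i))

/-! ### Auxiliary development -/

/-- The weight of a finset `s`: `∏ m ∈ s, (m^n)⁻¹` in `ℝ≥0∞`. -/
noncomputable def WW (n : ℕ) (s : Finset ℕ) : ℝ≥0∞ := ∏ m ∈ s, ((m : ℝ≥0∞) ^ n)⁻¹

/-- Sum of weights over finsets of cardinality `k` all of whose members satisfy `P`. -/
noncomputable def AA (n k : ℕ) (P : ℕ → Prop) : ℝ≥0∞ :=
  ∑' s : {s : Finset ℕ // s.card = k ∧ ∀ m ∈ s, P m}, WW n s.1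

/-- Strictly decreasing tuples correspond to finsets. -/
noncomputable def tupleFinsetEquiv (k : ℕ) (P : ℕ → Prop) :
    {f : Fin k → ℕ // StrictAnti f ∧ ∀ i, P (f i)} ≃
    {s : Finset ℕ // s.card = k ∧ ∀ m ∈ s, P m} where
  toFun f := ⟨Finset.image f.1 Finset.univ, by
      rw [Finset.card_image_of_injective _ f.2.1.injective, card_univ, Fintype.card_fin], by
      intro m hm
      obtain ⟨i, -, rfl⟩ := Finset.mem_image.1 hm
      exact f.2.2 i⟩
  invFun s := ⟨fun i => s.1.orderEmbOfFin s.2.1 i.rev,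
    fun i j hij => (s.1.orderEmbOfFin s.2.1).strictMono (Fin.rev_lt_rev.2 hij),
    fun i => s.2.2 _ (Finset.orderEmbOfFin_mem _ _ _)⟩
  left_inv := by
    rintro ⟨f, hf, hP⟩
    have hcard : (Finset.image f Finset.univ).card = k := by
      rw [Finset.card_image_of_injective _ hf.injective, card_univ, Fintype.card_fin]
    have hmono : StrictMono (fun i : Fin k => f i.rev) := fun i j hij =>
      hf (Fin.rev_lt_rev.2 hij)
    have hmem : ∀ i : Fin k, f i.rev ∈ Finset.image f Finset.univ := fun i =>
      Finset.mem_image_of_mem f (Finset.mem_univ _)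
    have key := Finset.orderEmbOfFin_unique hcard hmem hmono
    apply Subtype.ext
    funext i
    show (Finset.image f Finset.univ).orderEmbOfFin hcard i.rev = f i
    rw [← congrFun key i.rev, Fin.rev_rev]
  right_inv := by
    rintro ⟨s, hcard, hP⟩
    apply Subtype.ext
    show Finset.image (fun i : Fin k => s.orderEmbOfFin hcard i.rev) Finset.univ = s
    apply Finset.coe_injective
    rw [Finset.coe_image, Finset.coe_univ, Set.image_univ]
    have h1 : (fun i : Fin k => s.orderEmbOfFin hcard i.rev) =
        (s.orderEmbOfFin hcard) ∘ Fin.rev := rfl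
    rw [h1, Function.Surjective.range_comp Fin.rev_involutive.surjective,
      Finset.range_orderEmbOfFin]

lemma WW_ne_top {n : ℕ} {s : Finset ℕ} (hs : ∀ m ∈ s, 0 < m) : WW n s ≠ ∞ := by
  rw [WW]
  refine (ENNReal.prod_lt_top fun m hm => ?_).ne
  rw [lt_top_iff_ne_top, Ne, ENNReal.inv_eq_top]
  exact pow_ne_zero _ (Nat.cast_ne_zero.2 (hs m hm).ne')

lemma WW_toReal (n : ℕ) (s : Finset ℕ) :
    (WW n s).toReal = ∏ m ∈ s, 1 / ((m : ℝ) ^ n) := by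
  rw [WW, ENNReal.toReal_prod]
  refine Finset.prod_congr rfl fun m _ => ?_
  rw [ENNReal.toReal_inv, ENNReal.toReal_pow, ENNReal.toReal_natCast, one_div]

lemma AA_toReal (n k : ℕ) (P : ℕ → Prop) (hP : ∀ m, P m → 0 < m) :
    (AA n k P).toReal =
      ∑' s : {s : Finset ℕ // s.card = k ∧ ∀ m ∈ s, P m}, ∏ m ∈ s.1, 1 / ((m : ℝ) ^ n) := by
  rw [AA, ENNReal.tsum_toReal_eq fun s => WW_ne_top fun m hm => hP m (s.2.2 m hm)]
  exact tsum_congr fun s => WW_toReal n s.1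

lemma multZeta_eq_AA (n k : ℕ) :
    multZeta (fun _ : Fin k => n) = (AA n k (fun m => 0 < m)).toReal := by
  rw [AA_toReal n k _ (fun m hm => hm), multZeta,
    ← Equiv.tsum_eq (tupleFinsetEquiv k (fun m => 0 < m))
      (fun s => ∏ m ∈ s.1, 1 / ((m : ℝ) ^ n))]
  refine tsum_congr fun f => ?_
  have h0 : ((tupleFinsetEquiv k (fun m => 0 < m)) f).1 = Finset.image f.1 Finset.univ := rfl
  rw [h0, Finset.prod_image (fun i _ j _ h => f.2.1.injective h)]

lemma multT_eq_AA (n k : ℕ) :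
    multT (fun _ : Fin k => n) = (AA n k Odd).toReal := by
  rw [AA_toReal n k _ (fun m hm => hm.pos), multT,
    ← Equiv.tsum_eq (tupleFinsetEquiv k Odd)
      (fun s => ∏ m ∈ s.1, 1 / ((m : ℝ) ^ n))]
  refine tsum_congr fun f => ?_
  have h0 : ((tupleFinsetEquiv k Odd) f).1 = Finset.image f.1 Finset.univ := rfl
  rw [h0, Finset.prod_image (fun i _ j _ h => f.2.1.injective h)]

/-! ### The splitting into even and odd parts -/

/-- The number of even elements, as an element of `Fin (k+1)`. -/
noncomputable def evCard (k : ℕ) (s : {s : Finset ℕ // s.card = k ∧ ∀ m ∈ s, 0 < m}) :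
    Fin (k + 1) :=
  ⟨(s.1.filter (fun m => Even m)).card, by
    have h1 := Finset.card_filter_le s.1 (fun m => Even m)
    have h2 := s.2.1
    omega⟩

noncomputable def fiberEquiv (k : ℕ) (j : Fin (k + 1)) :
    ({a : Finset ℕ // a.card = (j : ℕ) ∧ ∀ m ∈ a, Even m ∧ 0 < m} ×
     {b : Finset ℕ // b.card = k - (j : ℕ) ∧ ∀ m ∈ b, Odd m}) ≃
    {s : {s : Finset ℕ // s.card = k ∧ ∀ m ∈ s, 0 < m} // evCard k s = j} where
  toFun p := by
    refine ⟨⟨p.1.1 ∪ p.2.1, ?_, ?_⟩, ?_⟩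
    · have hdisj : Disjoint p.1.1 p.2.1 := by
        rw [Finset.disjoint_left]
        intro m hm1 hm2
        exact (Nat.not_even_iff_odd.2 (p.2.2.2 m hm2)) (p.1.2.2 m hm1).1
      rw [Finset.card_union_of_disjoint hdisj, p.1.2.1, p.2.2.1]
      have := j.isLt
      omega
    · intro m hm
      rcases Finset.mem_union.1 hm with h | h
      · exact (p.1.2.2 m h).2
      · exact (p.2.2.2 m h).pos
    · apply Fin.ext
      show ((p.1.1 ∪ p.2.1).filter (fun m => Even m)).card = (j : ℕ)
      rw [Finset.filter_union,
        Finset.filter_true_of_mem (fun m hm => (p.1.2.2 m hm).1),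
        Finset.filter_false_of_mem
          (fun m hm => Nat.not_even_iff_odd.2 (p.2.2.2 m hm)),
        Finset.union_empty, p.1.2.1]
  invFun s := by
    refine ⟨⟨s.1.1.filter (fun m => Even m), ?_, ?_⟩,
            ⟨s.1.1.filter (fun m => ¬ Even m), ?_, ?_⟩⟩
    · have := s.2
      rw [Fin.ext_iff] at this
      exact this
    · intro m hm
      rw [Finset.mem_filter] at hm
      exact ⟨hm.2, s.1.2.2 m hm.1⟩
    · have h1 : (s.1.1.filter (fun m => Even m)).card = (j : ℕ) := by
        have := s.2; rw [Fin.ext_iff] at this; exact this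
      have h2 := Finset.card_filter_add_card_filter_not
        (s := s.1.1) (p := fun m => Even m)
      rw [s.1.2.1] at h2
      omega
    · intro m hm
      rw [Finset.mem_filter] at hm
      exact Nat.not_even_iff_odd.1 hm.2
  left_inv := by
    rintro ⟨⟨a, ha⟩, ⟨b, hb⟩⟩
    have hae : (a ∪ b).filter (fun m => Even m) = a := by
      rw [Finset.filter_union,
        Finset.filter_true_of_mem (fun m hm => (ha.2 m hm).1),
        Finset.filter_false_of_mem (fun m hm => Nat.not_even_iff_odd.2 (hb.2 m hm)),
        Finset.union_empty]
    have hbo : (a ∪ b).filter (fun m => ¬ Even m) = b := by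
      rw [Finset.filter_union,
        Finset.filter_false_of_mem (fun m hm => not_not.2 (ha.2 m hm).1),
        Finset.filter_true_of_mem (fun m hm => Nat.not_even_iff_odd.2 (hb.2 m hm)),
        Finset.empty_union]
    exact Prod.ext (Subtype.ext hae) (Subtype.ext hbo)
  right_inv := by
    rintro ⟨⟨s, hs⟩, hj⟩
    apply Subtype.ext
    apply Subtype.ext
    show s.filter (fun m => Even m) ∪ s.filter (fun m => ¬ Even m) = s
    exact Finset.filter_union_filter_not_eq _ s

/-- Doubling: positive finsets of card `j` correspond to even positive finsets of card `j`. -/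
noncomputable def doubleEquiv (j : ℕ) :
    {s : Finset ℕ // s.card = j ∧ ∀ m ∈ s, 0 < m} ≃
    {a : Finset ℕ // a.card = j ∧ ∀ m ∈ a, Even m ∧ 0 < m} where
  toFun s := ⟨s.1.image (fun m => 2 * m), by
      rw [Finset.card_image_of_injective _ (mul_right_injective₀ (two_ne_zero)), s.2.1], by
      intro m hm
      obtain ⟨m', hm', rfl⟩ := Finset.mem_image.1 hm
      exact ⟨even_two_mul m', by have := s.2.2 m' hm'; omega⟩⟩
  invFun a := ⟨a.1.image (fun m => m / 2), by
      rw [Finset.card_image_of_injOn, a.2.1]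
      intro x hx y hy hxy
      have hxy' : x / 2 = y / 2 := hxy
      have hx2 := (a.2.2 x hx).1
      have hy2 := (a.2.2 y hy).1
      rw [Nat.even_iff] at hx2 hy2
      omega, by
      intro m hm
      obtain ⟨m', hm', rfl⟩ := Finset.mem_image.1 hm
      have h1 := (a.2.2 m' hm').1
      have h2 := (a.2.2 m' hm').2
      rw [Nat.even_iff] at h1
      show 0 < m' / 2
      omega⟩
  left_inv := by
    rintro ⟨s, hs⟩
    apply Subtype.ext
    show (s.image (fun m => 2 * m)).image (fun m => m / 2) = s
    rw [Finset.image_image]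
    have h : ((fun m => m / 2) ∘ fun m => 2 * m) = id := by
      funext m; simp [Nat.mul_div_cancel_left m two_pos]
    rw [h, Finset.image_id]
  right_inv := by
    rintro ⟨a, ha⟩
    apply Subtype.ext
    show (a.image (fun m => m / 2)).image (fun m => 2 * m) = a
    rw [Finset.image_image]
    rw [Finset.image_congr (g := id) ?_, Finset.image_id]
    intro m hm
    have h1 := (ha.2 m hm).1
    rw [Nat.even_iff] at h1
    show 2 * (m / 2) = m
    omega

lemma WW_double (n : ℕ) (s : Finset ℕ) :
    WW n (s.image (fun m => 2 * m)) = (((2 : ℝ≥0∞) ^ n)⁻¹) ^ s.card * WW n s := by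
  rw [WW, WW, Finset.prod_image
    (fun x _ y _ h => mul_right_injective₀ (two_ne_zero) h)]
  rw [← Finset.prod_const, ← Finset.prod_mul_distrib]
  refine Finset.prod_congr rfl fun m _ => ?_
  have h1 : ((2 * m : ℕ) : ℝ≥0∞) = 2 * (m : ℝ≥0∞) := by push_cast; ring
  rw [h1, mul_pow, ENNReal.mul_inv (Or.inl (by positivity))
    (Or.inl (ENNReal.pow_ne_top ENNReal.ofNat_ne_top))]

lemma AA_even (n j : ℕ) :
    AA n j (fun m => Even m ∧ 0 < m) = ((2 : ℝ≥0∞) ^ (n * j))⁻¹ * AA n j (fun m => 0 < m) := by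
  rw [AA, ← Equiv.tsum_eq (doubleEquiv j) (fun a => WW n a.1)]
  rw [AA, ← ENNReal.tsum_mul_left]
  refine tsum_congr fun s => ?_
  show WW n (s.1.image (fun m => 2 * m)) = _
  rw [WW_double, s.2.1, ← ENNReal.inv_pow, ← pow_mul]

/-- The key splitting identity in `ℝ≥0∞`. -/
lemma AA_split (n k : ℕ) :
    AA n k (fun m => 0 < m) =
      ∑ j ∈ Finset.range (k + 1),
        ((2 : ℝ≥0∞) ^ (n * j))⁻¹ * AA n j (fun m => 0 < m) * AA n (k - j) Odd := by
  have h1 : AA n k (fun m => 0 < m) =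
      ∑' q : (Σ j : Fin (k + 1),
          {s : {s : Finset ℕ // s.card = k ∧ ∀ m ∈ s, 0 < m} // evCard k s = j}),
        WW n q.2.1.1 := by
    rw [AA, ← Equiv.tsum_eq (Equiv.sigmaFiberEquiv (evCard k)) (fun s => WW n s.1)]
    rfl
  rw [h1, ENNReal.tsum_sigma', tsum_fintype]
  rw [← Fin.sum_univ_eq_sum_range
    (fun j => ((2 : ℝ≥0∞) ^ (n * j))⁻¹ * AA n j (fun m => 0 < m) * AA n (k - j) Odd) (k + 1)]
  refine Finset.sum_congr rfl fun j _ => ?_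
  rw [← Equiv.tsum_eq (fiberEquiv k j) (fun s => WW n s.1.1)]
  have hterm : ∀ p : ({a : Finset ℕ // a.card = (j : ℕ) ∧ ∀ m ∈ a, Even m ∧ 0 < m} ×
      {b : Finset ℕ // b.card = k - (j : ℕ) ∧ ∀ m ∈ b, Odd m}),
      WW n ((fiberEquiv k j p).1.1 : Finset ℕ) = WW n p.1.1 * WW n p.2.1 := by
    rintro ⟨⟨a, ha⟩, ⟨b, hb⟩⟩
    have hdisj : Disjoint a b := by
      rw [Finset.disjoint_left]
      intro m hm1 hm2
      exact (Nat.not_even_iff_odd.2 (hb.2 m hm2)) (ha.2 m hm1).1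
    show WW n (a ∪ b) = _
    rw [WW, WW, WW, Finset.prod_union hdisj]
  rw [tsum_congr hterm, ENNReal.tsum_prod']
  calc (∑' (a : {a : Finset ℕ // a.card = (j : ℕ) ∧ ∀ m ∈ a, Even m ∧ 0 < m})
          (b : {b : Finset ℕ // b.card = k - (j : ℕ) ∧ ∀ m ∈ b, Odd m}),
          WW n a.1 * WW n b.1)
      = ∑' (a : {a : Finset ℕ // a.card = (j : ℕ) ∧ ∀ m ∈ a, Even m ∧ 0 < m}),
          WW n a.1 * AA n (k - (j : ℕ)) Odd := tsum_congr fun a => ENNReal.tsum_mul_left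
    _ = AA n (j : ℕ) (fun m => Even m ∧ 0 < m) * AA n (k - (j : ℕ)) Odd :=
        ENNReal.tsum_mul_right
    _ = _ := by rw [AA_even]

/-! ### Finiteness -/

lemma tsum_pi_pow (j : ℕ) (w : ℕ → ℝ≥0∞) :
    ∑' f : Fin j → ℕ, ∏ i, w (f i) = (∑' m, w m) ^ j := by
  induction j with
  | zero =>
    haveI : Unique (Fin 0 → ℕ) := ⟨⟨fun i => i.elim0⟩, fun f => funext fun i => i.elim0⟩
    rw [pow_zero, tsum_eq_single default (fun b hb => absurd (Subsingleton.elim b default) hb)]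
    simp
  | succ j ih =>
    rw [← Equiv.tsum_eq (Fin.consEquiv (fun _ : Fin (j + 1) => ℕ))
      (fun f => ∏ i, w (f i))]
    have hterm : ∀ p : ℕ × (Fin j → ℕ),
        (∏ i, w ((Fin.consEquiv (fun _ : Fin (j + 1) => ℕ)) p i)) =
          w p.1 * ∏ i, w (p.2 i) := by
      rintro ⟨x, g⟩
      show (∏ i : Fin (j + 1), w (Fin.cons (α := fun _ => ℕ) x g i)) =
        w x * ∏ i : Fin j, w (g i)
      rw [Fin.prod_univ_succ]
      simp
    calc (∑' p : ℕ × (Fin j → ℕ),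
            ∏ i, w ((Fin.consEquiv (fun _ : Fin (j + 1) => ℕ)) p i))
        = ∑' p : ℕ × (Fin j → ℕ), w p.1 * ∏ i, w (p.2 i) :=
          tsum_congr hterm
      _ = ∑' (x : ℕ) (g : Fin j → ℕ), w x * ∏ i, w (g i) := ENNReal.tsum_prod'
      _ = ∑' x : ℕ, w x * ∑' g : Fin j → ℕ, ∏ i, w (g i) :=
          tsum_congr fun x => ENNReal.tsum_mul_left
      _ = (∑' x, w x) * (∑' g : Fin j → ℕ, ∏ i, w (g i)) := ENNReal.tsum_mul_right
      _ = (∑' m, w m) ^ (j + 1) := by rw [ih, pow_succ, mul_comm]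

lemma base_ne_top (n : ℕ) (hn : 2 ≤ n) :
    (∑' m : ℕ, (((m + 1 : ℕ) : ℝ≥0∞) ^ n)⁻¹) ≠ ∞ := by
  have hle : ∀ m : ℕ, (((m + 1 : ℕ) : ℝ≥0∞) ^ n)⁻¹ ≤ (((m + 1 : ℕ) : ℝ≥0∞) ^ 2)⁻¹ := by
    intro m
    apply ENNReal.inv_le_inv.2
    apply pow_le_pow_right' _ hn
    exact_mod_cast Nat.succ_le_succ (Nat.zero_le m)
  refine ne_top_of_le_ne_top ?_ (ENNReal.tsum_le_tsum hle)
  have heq : ∀ m : ℕ, (((m + 1 : ℕ) : ℝ≥0∞) ^ 2)⁻¹ =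
      ((((((m + 1 : ℕ) : ℝ≥0)) ^ 2)⁻¹ : ℝ≥0) : ℝ≥0∞) := by
    intro m
    rw [ENNReal.coe_inv (by positivity), ENNReal.coe_pow, ENNReal.coe_natCast]
  rw [tsum_congr heq, ENNReal.tsum_coe_ne_top_iff_summable]
  rw [← NNReal.summable_coe]
  have : Summable (fun m : ℕ => (((m + 1 : ℕ) : ℝ) ^ 2)⁻¹) := by
    have h2 : Summable (fun m : ℕ => ((m : ℝ) ^ 2)⁻¹) :=
      Real.summable_nat_pow_inv.2 one_lt_two
    exact h2.comp_injective (add_left_injective 1)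
  refine this.congr fun m => ?_
  push_cast
  ring

lemma image_orderEmbOfFin {s : Finset ℕ} {k : ℕ} (h : s.card = k) :
    Finset.image (s.orderEmbOfFin h) Finset.univ = s := by
  apply Finset.coe_injective
  rw [Finset.coe_image, Finset.coe_univ, Set.image_univ, Finset.range_orderEmbOfFin]

lemma AA_pos_ne_top (n k : ℕ) (hn : 2 ≤ n) : AA n k (fun m => 0 < m) ≠ ∞ := by
  set w : ℕ → ℝ≥0∞ := fun m => (((m + 1 : ℕ) : ℝ≥0∞) ^ n)⁻¹ with hw
  set φ : {s : Finset ℕ // s.card = k ∧ ∀ m ∈ s, 0 < m} → (Fin k → ℕ) :=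
    fun s => fun i => s.1.orderEmbOfFin s.2.1 i - 1 with hφ
  have hemb_pos : ∀ (s : {s : Finset ℕ // s.card = k ∧ ∀ m ∈ s, 0 < m}) (i : Fin k),
      0 < s.1.orderEmbOfFin s.2.1 i := fun s i =>
    s.2.2 _ (Finset.orderEmbOfFin_mem _ _ _)
  have hφadd : ∀ (s : {s : Finset ℕ // s.card = k ∧ ∀ m ∈ s, 0 < m}) (i : Fin k),
      φ s i + 1 = s.1.orderEmbOfFin s.2.1 i := fun s i =>
    Nat.succ_pred_eq_of_pos (hemb_pos s i)
  have hinj : Function.Injective φ := by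
    intro s t hst
    have hemb : ∀ i, s.1.orderEmbOfFin s.2.1 i = t.1.orderEmbOfFin t.2.1 i := by
      intro i
      have := congrFun hst i
      have h1 := hφadd s i
      have h2 := hφadd t i
      omega
    apply Subtype.ext
    rw [← image_orderEmbOfFin s.2.1, ← image_orderEmbOfFin t.2.1]
    exact Finset.image_congr fun i _ => hemb i
  have hterm : ∀ s : {s : Finset ℕ // s.card = k ∧ ∀ m ∈ s, 0 < m},
      WW n s.1 = ∏ i, w (φ s i) := by
    intro s
    rw [WW, ← image_orderEmbOfFin s.2.1,
      Finset.prod_image (fun i _ j _ h => (s.1.orderEmbOfFin s.2.1).injective h)]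
    refine Finset.prod_congr rfl fun i _ => ?_
    rw [hw]
    simp only
    rw [hφadd s i]
  have hle := ENNReal.tsum_comp_le_tsum_of_injective hinj (fun f : Fin k → ℕ => ∏ i, w (f i))
  rw [AA, tsum_congr hterm]
  refine ne_top_of_le_ne_top ?_ hle
  rw [tsum_pi_pow]
  exact ENNReal.pow_ne_top (base_ne_top n hn)

lemma AA_odd_ne_top (n k : ℕ) (hn : 2 ≤ n) : AA n k Odd ≠ ∞ := by
  refine ne_top_of_le_ne_top (AA_pos_ne_top n k hn) ?_
  rw [AA, AA]
  exact ENNReal.tsum_comp_le_tsum_of_injective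
    (f := fun s : {s : Finset ℕ // s.card = k ∧ ∀ m ∈ s, Odd m} =>
      (⟨s.1, s.2.1, fun m hm => (s.2.2 m hm).pos⟩ :
        {s : Finset ℕ // s.card = k ∧ ∀ m ∈ s, 0 < m}))
    (by
      intro a b hab
      apply Subtype.ext
      have h1 : (⟨a.1, a.2.1, fun m hm => (a.2.2 m hm).pos⟩ :
          {s : Finset ℕ // s.card = k ∧ ∀ m ∈ s, 0 < m}).1 =
        (⟨b.1, b.2.1, fun m hm => (b.2.2 m hm).pos⟩ :
          {s : Finset ℕ // s.card = k ∧ ∀ m ∈ s, 0 < m}).1 := congrArg Subtype.val hab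
      exact h1)
    (fun s => WW n s.1)

/-- `ζ({n}_k) = Σ_{j=0}^{k} 2^{−nj} ζ({n}_j) t({n}_{k−j})`, the coefficient
form of `T_n(x) = Z_n(x)/Z_n(x/2)` (Theorem `trep`). -/
theorem multZeta_repeat_eq_sum (n k : ℕ) (hn : 2 ≤ n) (hk : 1 ≤ k) :
    multZeta (fun _ : Fin k => n) =
      ∑ j ∈ Finset.range (k + 1),
        ((2 : ℝ) ^ (n * j))⁻¹ * multZeta (fun _ : Fin j => n) *
          multT (fun _ : Fin (k - j) => n) := by
  have hfin : ∀ j ∈ Finset.range (k + 1),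
      ((2 : ℝ≥0∞) ^ (n * j))⁻¹ * AA n j (fun m => 0 < m) * AA n (k - j) Odd ≠ ∞ := by
    intro j _
    exact ENNReal.mul_ne_top
      (ENNReal.mul_ne_top (ENNReal.inv_ne_top.2 (pow_ne_zero _ two_ne_zero))
        (AA_pos_ne_top n j hn))
      (AA_odd_ne_top n (k - j) hn)
  rw [multZeta_eq_AA, AA_split, ENNReal.toReal_sum hfin]
  refine Finset.sum_congr rfl fun j _ => ?_
  rw [ENNReal.toReal_mul, ENNReal.toReal_mul, ENNReal.toReal_inv, ENNReal.toReal_pow,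
    ENNReal.toReal_ofNat, multZeta_eq_AA, multT_eq_AA]
end

section
/- For every integer n ≥ 1, t({2}_n) = π^{2n} / (2^{2n} (2n)!). -/
open Filter Finset Real Topology FormalMultilinearSeries
open scoped Nat

section PowerSeries

variable {𝕜 : Type*} [NontriviallyNormedField 𝕜]

theorem one_le_ofScalars_radius_of_summable {a : ℕ → 𝕜} (ha : Summable fun n => ‖a n‖) :
    1 ≤ (ofScalars 𝕜 a).radius := by
  simpa using (ofScalars 𝕜 a).le_radius_of_summable_norm (r := 1) (by simpa [ofScalars_norm])

theorem eq_of_frequently_tsum_mul_pow_eq [CompleteSpace 𝕜] {a b : ℕ → 𝕜}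
    (ha : 0 < (ofScalars 𝕜 a).radius) (hb : 0 < (ofScalars 𝕜 b).radius)
    (h : ∃ᶠ w in 𝓝[≠] 0, ∑' n, a n * w ^ n = ∑' n, b n * w ^ n) : a = b := by
  have hfa := ((ofScalars 𝕜 a).hasFPowerSeriesOnBall ha).hasFPowerSeriesAt
  have hfb := ((ofScalars 𝕜 b).hasFPowerSeriesOnBall hb).hasFPowerSeriesAt
  have heq : (ofScalars 𝕜 a).sum =ᶠ[𝓝 0] (ofScalars 𝕜 b).sum := by
    refine (hfa.analyticAt.frequently_eq_iff_eventually_eq hfb.analyticAt).mp ?_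
    simpa [← ofScalarsSum.eq_1, ofScalars_sum_eq] using h
  exact ofScalars_series_injective 𝕜 𝕜 ((hfa.congr heq).eq_formalMultilinearSeries hfb)

end PowerSeries

section TsumEsymm

noncomputable def tsumEsymm (x : ℕ → ℝ) (n : ℕ) : ℝ :=
  ∑' s : {s : Finset ℕ // s.card = n}, ∏ i ∈ s.1, x i

variable {x : ℕ → ℝ}

theorem summable_prod_const_mul (hx : Summable x) (c : ℝ) :
    Summable fun s : Finset ℕ => ∏ i ∈ s, c * x i := by
  refine .of_abs <| (summable_finsetProd_of_summable_nonneg (fun i => abs_nonneg (c * x i))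
    (by simpa only [abs_mul] using hx.abs.mul_left |c|)).congr fun s => ?_
  rw [Finset.abs_prod]

theorem hasSum_tsumEsymm_mul_pow (hx : Summable x) (c : ℝ) :
    HasSum (fun n => tsumEsymm x n * c ^ n) (∑' s : Finset ℕ, ∏ i ∈ s, c * x i) := by
  have hsum := summable_prod_const_mul hx c
  let e := Equiv.sigmaFiberEquiv (Finset.card : Finset ℕ → ℕ)
  refine (e.hasSum_iff.mpr hsum.hasSum).sigma fun n => ?_
  have hfiber : Summable fun s : {s : Finset ℕ // s.card = n} => ∏ i ∈ s.1, c * x i :=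
    (e.summable_iff.mpr hsum).sigma_factor n
  have hfiber_tsum :
      tsumEsymm x n * c ^ n = ∑' s : {s : Finset ℕ // s.card = n}, ∏ i ∈ s.1, c * x i := by
    rw [tsumEsymm, ← tsum_mul_right]
    refine tsum_congr fun s => ?_
    rw [prod_mul_distrib, prod_const, s.2, mul_comm]
  exact hfiber_tsum ▸ hfiber.hasSum

theorem summable_tsumEsymm (hx : Summable x) : Summable (tsumEsymm x) := by
  simpa using (hasSum_tsumEsymm_mul_pow hx 1).summable

theorem tendsto_prod_one_add_mul (hx : Summable x) (c : ℝ) :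
    Tendsto (fun N => ∏ k ∈ range N, (1 + c * x k)) atTop
      (𝓝 (∑' n, tsumEsymm x n * c ^ n)) := by
  rw [(hasSum_tsumEsymm_mul_pow hx c).tsum_eq]
  exact (hasProd_one_add_of_hasSum_prod (summable_prod_const_mul hx c).hasSum).tendsto_prod_nat

end TsumEsymm

section EulerCosProd

theorem prod_range_two_mul_one_sub_sq_div_sq (u : ℝ) (N : ℕ) :
    ∏ j ∈ range (2 * N), (1 - u ^ 2 / ((j : ℝ) + 1) ^ 2) =
      (∏ k ∈ range N, (1 - u ^ 2 / (2 * (k : ℝ) + 1) ^ 2)) *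
        ∏ k ∈ range N, (1 - (u / 2) ^ 2 / ((k : ℝ) + 1) ^ 2) := by
  induction N with
  | zero => simp
  | succ N ih =>
    rw [show 2 * (N + 1) = 2 * N + 1 + 1 by ring, prod_range_succ, prod_range_succ, ih,
      prod_range_succ, prod_range_succ]
    have heven : (u / 2) ^ 2 / ((N : ℝ) + 1) ^ 2 = u ^ 2 / (((2 * N + 1 : ℕ) : ℝ) + 1) ^ 2 := by
      push_cast
      field_simp
      ring
    rw [heven]
    push_cast
    ring

theorem tendsto_euler_cos_prod {u : ℝ} (hu : sin (π * u / 2) ≠ 0) :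
    Tendsto (fun N => ∏ k ∈ range N, (1 - u ^ 2 / (2 * (k : ℝ) + 1) ^ 2)) atTop
      (𝓝 (cos (π * u / 2))) := by
  have hsin := (tendsto_euler_sin_prod u).comp
    (tendsto_atTop_mono (fun N => Nat.le_mul_of_pos_left N two_pos) tendsto_id)
  have hsin_half := tendsto_euler_sin_prod (u / 2)
  rw [← mul_div_assoc] at hsin_half
  have hlim : sin (π * u) / 2 / sin (π * u / 2) = cos (π * u / 2) := by
    rw [show π * u = 2 * (π * u / 2) by ring, sin_two_mul]
    field_simp
  rw [← hlim]
  refine ((hsin.div_const 2).div hsin_half hu).congr' ?_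
  filter_upwards [hsin_half.eventually_ne hu] with N hN
  simp only [Pi.div_apply, Function.comp_apply, prod_range_two_mul_one_sub_sq_div_sq]
  rw [div_eq_iff hN]
  ring

end EulerCosProd

section OddTuples

def orderEmbEquivStrictAntiOdd (n : ℕ) :
    (Fin n ↪o ℕ) ≃ {f : Fin n → ℕ // StrictAnti f ∧ ∀ i, Odd (f i)} where
  toFun g := ⟨fun i => 2 * g i.rev + 1,
    fun i j hij => by
      have := g.strictMono (Fin.rev_lt_rev.mpr hij)
      dsimp only
      omega,
    fun i => odd_two_mul_add_one _⟩
  invFun f := OrderEmbedding.ofStrictMono (fun j => f.1 j.rev / 2)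
    fun i j hij => by
      have := f.2.1 (Fin.rev_lt_rev.mpr hij)
      obtain ⟨a, ha⟩ := f.2.2 i.rev
      obtain ⟨b, hb⟩ := f.2.2 j.rev
      dsimp only
      omega
  left_inv g := by ext; simp; omega
  right_inv f := by
    ext i
    obtain ⟨a, ha⟩ := f.2.2 i
    change 2 * (f.1 i.rev.rev / 2) + 1 = f.1 i
    rw [Fin.rev_rev]
    omega

theorem tsum_prod_strictAnti_odd (g : ℕ → ℝ) (n : ℕ) :
    ∑' f : {f : Fin n → ℕ // StrictAnti f ∧ ∀ i, Odd (f i)}, ∏ i, g (f.1 i) =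
      tsumEsymm (fun k => g (2 * k + 1)) n := by
  rw [← (orderEmbEquivStrictAntiOdd n).tsum_eq]
  refine (tsum_congr fun e => ?_).trans
    (Set.powersetCard.ofFinEmbEquiv.tsum_eq fun s => ∏ i ∈ s.1, g (2 * i + 1))
  simp only [orderEmbEquivStrictAntiOdd, Equiv.coe_fn_mk, Set.powersetCard.ofFinEmbEquiv_apply,
    Set.powersetCard.val_ofFinEmb, prod_map, RelEmbedding.coe_toEmbedding]
  exact Equiv.prod_comp Fin.revPerm fun i => g (2 * e i + 1)

end OddTuples

noncomputable def oddInvSq (k : ℕ) : ℝ := 1 / ((2 * k + 1 : ℕ) : ℝ) ^ 2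

theorem summable_oddInvSq : Summable oddInvSq :=
  (Real.summable_one_div_nat_pow.mpr one_lt_two).comp_injective fun a b h => by simp_all

theorem tsum_tsumEsymm_oddInvSq_mul_neg_sq_pow {u : ℝ} (hu : sin (π * u / 2) ≠ 0) :
    ∑' n, tsumEsymm oddInvSq n * (-u ^ 2) ^ n = cos (π * u / 2) := by
  refine tendsto_nhds_unique (tendsto_prod_one_add_mul summable_oddInvSq _) ?_
  refine (tendsto_euler_cos_prod hu).congr fun N => prod_congr rfl fun k _ => ?_
  simp only [oddInvSq]
  push_cast
  ring

theorem cos_eq_tsum_mul_neg_sq_pow (u : ℝ) :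
    cos (π * u / 2) = ∑' n, (π / 2) ^ (2 * n) / (2 * n)! * (-u ^ 2) ^ n := by
  rw [Real.cos_eq_tsum]
  refine tsum_congr fun n => ?_
  ring

theorem summable_pow_two_mul_div_factorial (x : ℝ) :
    Summable fun n => x ^ (2 * n) / (2 * n)! :=
  (Real.summable_pow_div_factorial x).comp_injective fun a b h => by simpa using h

theorem tsumEsymm_oddInvSq : tsumEsymm oddInvSq = fun n => (π / 2) ^ (2 * n) / (2 * n)! := by
  refine eq_of_frequently_tsum_mul_pow_eq ?_ ?_ ?_
  · exact zero_lt_one.trans_le (one_le_ofScalars_radius_of_summable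
      (summable_tsumEsymm summable_oddInvSq).abs)
  · exact zero_lt_one.trans_le (one_le_ofScalars_radius_of_summable
      (summable_pow_two_mul_div_factorial _).abs)
  have hneg : ∀ᶠ w in 𝓝[<] (0 : ℝ),
      ∑' n, tsumEsymm oddInvSq n * w ^ n = ∑' n, (π / 2) ^ (2 * n) / (2 * n)! * w ^ n := by
    filter_upwards [Ioo_mem_nhdsLT (by norm_num : (-1 : ℝ) < 0)] with w hw
    obtain ⟨u, hu0, hu1, rfl⟩ : ∃ u : ℝ, 0 < u ∧ u < 1 ∧ w = -u ^ 2 :=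
      ⟨√(-w), Real.sqrt_pos.mpr (neg_pos.mpr hw.2),
        (Real.sqrt_lt' one_pos).mpr (by linarith [hw.1]),
        by rw [Real.sq_sqrt (neg_nonneg.mpr hw.2.le), neg_neg]⟩
    have hsin : sin (π * u / 2) ≠ 0 :=
      (sin_pos_of_pos_of_lt_pi (by positivity) (by nlinarith [pi_pos])).ne'
    rw [tsum_tsumEsymm_oddInvSq_mul_neg_sq_pow hsin, cos_eq_tsum_mul_neg_sq_pow]
  exact hneg.frequently.filter_mono (nhdsWithin_mono _ fun w hw => ne_of_lt hw)

theorem multT_repeat_two_general (n : ℕ) :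
    multT (fun _ : Fin n => 2) =
      Real.pi ^ (2 * n) / (2 ^ (2 * n) * Nat.factorial (2 * n)) := by
  calc multT (fun _ : Fin n => 2) = tsumEsymm oddInvSq n :=
        tsum_prod_strictAnti_odd (fun m => 1 / (m : ℝ) ^ 2) n
    _ = _ := by rw [congrFun tsumEsymm_oddInvSq n, div_pow, div_div]

/-- `t({2}_n) = π^(2n) / (2^(2n) (2n)!)`. -/
theorem multT_repeat_two (n : ℕ) (hn : 1 ≤ n) :
    multT (fun _ : Fin n => 2) =
      Real.pi ^ (2 * n) / (2 ^ (2 * n) * Nat.factorial (2 * n)) :=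
  multT_repeat_two_general n
end

section
/- For all integers n ≥ 2 and k ≥ 1, Σ_{j=0}^{k} (−1)^j · ζ({n}_j) · t*({n}_{k−j}) = (−1)^k · 2^{−nk} · ζ({n}_k), with the conventions ζ({n}_0) = t*({n}_0) = 1. (Equivalently, 1 + Σ_{k≥1} t*({n}_k) x^{kn} = Z_n(e^{πi/n} x/2) / Z_n(e^{πi/n} x), where Z_n(x) = 1 + Σ_{k≥1} ζ({n}_k) x^{kn}.) -/
/-- Multiple t-star value: sum over weakly decreasing tuples of odd positive
integers.  For `k = 0` this equals `1`, matching the convention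
`t*({n}_0) = 1`. -/
noncomputable def multTStar {k : ℕ} (a : Fin k → ℕ) : ℝ :=
  ∑' n : {f : Fin k → ℕ // Antitone f ∧ ∀ i, Odd (f i)},
    ∏ i, 1 / ((n.1 i : ℝ) ^ (a i))

/-!
Multiplying out, `Σ_j (-1)^j ζ({n}_j) t*({n}_{k-j})` is a signed sum over pairs `(s, M)` of a
finite set `s` of positive integers and a multiset `M` of odd integers with `|s| + |M| = k`,
the pair weighted by `(-1)^|s| ∏_{m ∈ s ⊎ M} m^{-n}`. Moving the largest odd element of `s ∪ M`
from `s` into `M`, or back, is an involution that keeps the product and flips the sign. The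
pairs it cannot act on are those with `M = ∅` and `s = 2T` for a set `T` of `k` positive
integers, and these contribute `(-1)^k 2^{-nk} ζ({n}_k)`.
-/

open Finset Function

namespace MultTStar

theorem prod_map_coe_ofFn {α R : Type*} [CommMonoid R] {k : ℕ} (h : α → R) (f : Fin k → α) :
    ((List.ofFn f : Multiset α).map h).prod = ∏ i, h (f i) := by
  simp [List.prod_ofFn]

section Sorting

variable {α : Type*} [LinearOrder α] {k : ℕ}

theorem eq_of_antitone_of_coe_ofFn_eq {f g : Fin k → α} (hf : Antitone f) (hg : Antitone g)
    (h : (List.ofFn f : Multiset α) = List.ofFn g) : f = g :=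
  List.ofFn_injective <|
    (Multiset.coe_eq_coe.1 h).eq_of_sortedGE hf.sortedGE_ofFn hg.sortedGE_ofFn

theorem exists_antitone_coe_ofFn_eq (M : Multiset α) (hM : Multiset.card M = k) :
    ∃ f : Fin k → α, Antitone f ∧ (List.ofFn f : Multiset α) = M := by
  obtain ⟨l, hl, rfl⟩ : ∃ l : List α, l.SortedGE ∧ (l : Multiset α) = M :=
    ⟨M.sort (· ≥ ·), List.sortedGE_iff_pairwise.2 (M.pairwise_sort _), M.sort_eq _⟩
  obtain rfl : l.length = k := by simpa using hM
  exact ⟨l.get, hl, by rw [List.ofFn_get]⟩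

variable (k)

noncomputable def antitoneTupleEquiv (P : α → Prop) :
    {f : Fin k → α // Antitone f ∧ ∀ i, P (f i)} ≃
      {M : Multiset α | Multiset.card M = k ∧ ∀ a ∈ M, P a} :=
  Equiv.ofBijective (fun f => ⟨List.ofFn f.1, by simp, by simpa using f.2.2⟩)
    ⟨fun f g h => Subtype.ext <| eq_of_antitone_of_coe_ofFn_eq f.2.1 g.2.1 (congrArg Subtype.val h),
     fun M => by
      obtain ⟨f, hf, hfM⟩ := exists_antitone_coe_ofFn_eq M.1 M.2.1
      refine ⟨⟨f, hf, fun i => M.2.2 _ ?_⟩, Subtype.ext hfM⟩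
      simp [← hfM]⟩

noncomputable def strictAntiTupleEquiv (P : α → Prop) :
    {f : Fin k → α // StrictAnti f ∧ ∀ i, P (f i)} ≃
      {s : Finset α | #s = k ∧ ∀ a ∈ s, P a} :=
  Equiv.ofBijective
    (fun f => ⟨⟨List.ofFn f.1, Multiset.coe_nodup.2 (List.nodup_ofFn.2 f.2.1.injective)⟩,
      by simp, by simpa [Finset.mem_mk] using f.2.2⟩)
    ⟨fun f g h => Subtype.ext <| eq_of_antitone_of_coe_ofFn_eq f.2.1.antitone g.2.1.antitone
      (congrArg (fun s : Finset α => s.val) (congrArg Subtype.val h)),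
     fun s => by
      obtain ⟨f, hf, hfs⟩ := exists_antitone_coe_ofFn_eq s.1.val s.2.1
      have hinj : Injective f := List.nodup_ofFn.1 (Multiset.coe_nodup.1 (hfs ▸ s.1.nodup))
      refine ⟨⟨f, hf.strictAnti_of_injective hinj, fun i => s.2.2 _ ?_⟩,
        Subtype.ext (Finset.val_inj.1 hfs)⟩
      simp [← Finset.mem_val, ← hfs]⟩

end Sorting

theorem summable_prod_tuple {ι : Type*} {h : ι → ℝ} (hh : Summable h) :
    ∀ k, Summable fun f : Fin k → ι => ∏ i, h (f i)
  | 0 => (hasSum_fintype _).summable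
  | k + 1 => by
    rw [← (Fin.consEquiv fun _ => ι).summable_iff]
    have := summable_mul_of_summable_norm (f := h) (g := fun f : Fin k → ι => ∏ i, h (f i))
      hh.norm (summable_prod_tuple hh k).norm
    refine this.congr fun p => ?_
    simp [Fin.prod_univ_succ]

theorem tsum_eq_zero_of_involutive_neg {α : Type*} {f : α → ℝ} {σ : α → α} (hσ : Involutive σ)
    (hf : ∀ x, f (σ x) = -f x) : ∑' x, f x = 0 := by
  have h : ∑' x, f x = -∑' x, f x :=
    calc ∑' x, f x = ∑' x, f (hσ.toPerm σ x) := ((hσ.toPerm σ).tsum_eq f).symm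
      _ = -∑' x, f x := by simp only [Involutive.coe_toPerm, hf, tsum_neg]
  linarith

abbrev posFinsets (k : ℕ) : Set (Finset ℕ) := {s | #s = k ∧ ∀ m ∈ s, 0 < m}

abbrev oddMultisets (k : ℕ) : Set (Multiset ℕ) := {M | Multiset.card M = k ∧ ∀ m ∈ M, Odd m}

noncomputable def posEsymm (h : ℕ → ℝ) (k : ℕ) : ℝ := ∑' s : posFinsets k, ∏ m ∈ s.1, h m

noncomputable def oddHsymm (h : ℕ → ℝ) (k : ℕ) : ℝ := ∑' M : oddMultisets k, (M.1.map h).prod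

section Reindex

variable (h : ℕ → ℝ) (k : ℕ)

theorem prod_strictAntiTupleEquiv (f : {f : Fin k → ℕ // StrictAnti f ∧ ∀ i, 0 < f i}) :
    ∏ m ∈ (strictAntiTupleEquiv k (0 < ·) f).1, h m = ∏ i, h (f.1 i) :=
  prod_map_coe_ofFn h f.1

theorem prod_antitoneTupleEquiv (f : {f : Fin k → ℕ // Antitone f ∧ ∀ i, Odd (f i)}) :
    ((antitoneTupleEquiv k Odd f).1.map h).prod = ∏ i, h (f.1 i) :=
  prod_map_coe_ofFn h f.1

theorem multZeta_const_eq_posEsymm (n : ℕ) :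
    multZeta (fun _ : Fin k => n) = posEsymm (fun m => 1 / (m : ℝ) ^ n) k := by
  rw [posEsymm, ← (strictAntiTupleEquiv k (0 < ·)).tsum_eq]
  exact tsum_congr fun f => (prod_strictAntiTupleEquiv (fun m => 1 / (m : ℝ) ^ n) k f).symm

theorem multTStar_const_eq_oddHsymm (n : ℕ) :
    multTStar (fun _ : Fin k => n) = oddHsymm (fun m => 1 / (m : ℝ) ^ n) k := by
  rw [oddHsymm, ← (antitoneTupleEquiv k Odd).tsum_eq]
  exact tsum_congr fun f => (prod_antitoneTupleEquiv (fun m => 1 / (m : ℝ) ^ n) k f).symm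

variable {h}

theorem summable_posFinsets (hh : Summable h) :
    Summable fun s : posFinsets k => ∏ m ∈ s.1, h m := by
  rw [← (strictAntiTupleEquiv k (0 < ·)).summable_iff]
  exact ((summable_prod_tuple hh k).comp_injective Subtype.val_injective).congr
    fun f => (prod_strictAntiTupleEquiv h k f).symm

theorem summable_oddMultisets (hh : Summable h) :
    Summable fun M : oddMultisets k => (M.1.map h).prod := by
  rw [← (antitoneTupleEquiv k Odd).summable_iff]
  exact ((summable_prod_tuple hh k).comp_injective Subtype.val_injective).congr
    fun f => (prod_antitoneTupleEquiv h k f).symm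

end Reindex

theorem posEsymm_const_mul (c : ℝ) (h : ℕ → ℝ) (k : ℕ) :
    posEsymm (fun m => c * h m) k = c ^ k * posEsymm h k := by
  rw [posEsymm, posEsymm, ← tsum_mul_left]
  refine tsum_congr fun s => ?_
  rw [prod_mul_distrib, prod_const, s.2.1]

noncomputable def signedWeight {α : Type*} (h : α → ℝ) (p : Finset α × Multiset α) : ℝ :=
  (-1) ^ #p.1 * (∏ m ∈ p.1, h m) * (p.2.map h).prod

def pairsOfSize (k : ℕ) : Set (Finset ℕ × Multiset ℕ) :=
  {p | #p.1 + Multiset.card p.2 = k ∧ (∀ m ∈ p.1, 0 < m) ∧ ∀ m ∈ p.2, Odd m}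

section Pairs

variable {h : ℕ → ℝ}

theorem hasSum_indicator_posFinsets_prod_oddMultisets (hh : Summable h) (j i : ℕ) :
    HasSum ((posFinsets j ×ˢ oddMultisets i).indicator (signedWeight h))
      ((-1) ^ j * posEsymm h j * oddHsymm h i) := by
  rw [← hasSum_subtype_iff_indicator, ← (Equiv.Set.prod _ _).symm.hasSum_iff]
  have hE := (summable_posFinsets j hh).norm
  have hH := (summable_oddMultisets i hh).norm
  have hprod := (summable_mul_of_summable_norm hE hH).hasSum
  rw [← tsum_mul_tsum_of_summable_norm hE hH] at hprod
  have hweight : (signedWeight h ∘ Subtype.val) ∘ (Equiv.Set.prod _ _).symm =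
      fun q : posFinsets j × oddMultisets i =>
        (-1) ^ j * ((∏ m ∈ q.1.1, h m) * (q.2.1.map h).prod) := by
    funext ⟨⟨s, hs⟩, M, hM⟩
    show (-1) ^ #s * (∏ m ∈ s, h m) * (M.map h).prod = _
    rw [hs.1, mul_assoc]
  rw [hweight, mul_assoc]
  exact hprod.mul_left _

theorem mem_posFinsets_prod_oddMultisets {j k : ℕ} (hj : j ≤ k) {p : Finset ℕ × Multiset ℕ} :
    p ∈ posFinsets j ×ˢ oddMultisets (k - j) ↔ #p.1 = j ∧ p ∈ pairsOfSize k := by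
  simp only [Set.mem_prod, posFinsets, oddMultisets, pairsOfSize, Set.mem_ofPred_eq]
  constructor
  · rintro ⟨⟨rfl, hpos⟩, hcard, hodd⟩
    exact ⟨rfl, by omega, hpos, hodd⟩
  · rintro ⟨rfl, hcard, hpos, hodd⟩
    exact ⟨⟨rfl, hpos⟩, by omega, hodd⟩

theorem sum_indicator_posFinsets_prod_oddMultisets {β : Type*} [AddCommMonoid β]
    (w : Finset ℕ × Multiset ℕ → β) (k : ℕ) (p : Finset ℕ × Multiset ℕ) :
    ∑ j ∈ range (k + 1), (posFinsets j ×ˢ oddMultisets (k - j)).indicator w p =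
      (pairsOfSize k).indicator w p := by
  classical
  have hterm : ∀ j ∈ range (k + 1), (posFinsets j ×ˢ oddMultisets (k - j)).indicator w p =
      if #p.1 = j then (pairsOfSize k).indicator w p else 0 := by
    intro j hj
    simp only [Set.indicator_apply, mem_posFinsets_prod_oddMultisets (mem_range_succ_iff.1 hj),
      ite_and]
  rw [sum_congr rfl hterm, sum_ite_eq]
  by_cases hp : p ∈ pairsOfSize k
  · rw [if_pos (mem_range_succ_iff.2 (hp.1 ▸ Nat.le_add_right _ _))]
  · simp [hp]

theorem hasSum_indicator_pairsOfSize (hh : Summable h) (k : ℕ) :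
    HasSum ((pairsOfSize k).indicator (signedWeight h))
      (∑ j ∈ range (k + 1), (-1) ^ j * posEsymm h j * oddHsymm h (k - j)) := by
  convert hasSum_sum fun j _ => hasSum_indicator_posFinsets_prod_oddMultisets hh j (k - j) using 1
  funext p
  exact (sum_indicator_posFinsets_prod_oddMultisets _ k p).symm

end Pairs

section Toggle

variable {α : Type*} [DecidableEq α] {a : α} {p : Finset α × Multiset α}

def toggle (a : α) (p : Finset α × Multiset α) : Finset α × Multiset α :=
  if a ∈ p.1 then (p.1.erase a, a ::ₘ p.2) else (insert a p.1, p.2.erase a)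

theorem toggle_of_mem (ha : a ∈ p.1) : toggle a p = (p.1.erase a, a ::ₘ p.2) := if_pos ha

theorem toggle_of_notMem (ha : a ∉ p.1) : toggle a p = (insert a p.1, p.2.erase a) := if_neg ha

theorem toggle_toggle (ha : a ∈ p.1 ∨ a ∈ p.2) : toggle a (toggle a p) = p := by
  by_cases has : a ∈ p.1
  · rw [toggle_of_mem has, toggle_of_notMem (notMem_erase a p.1), insert_erase has,
      Multiset.erase_cons_head]
  · rw [toggle_of_notMem has, toggle_of_mem (mem_insert_self a p.1), erase_insert has,
      Multiset.cons_erase (ha.resolve_left has)]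

theorem toggle_rel {r : Finset α × Multiset α → Finset α × Multiset α → Prop}
    (hr : ∀ p q, r p q → r q p) (hmem : ∀ p : Finset α × Multiset α, a ∈ p.1 → r p (toggle a p))
    (ha : a ∈ p.1 ∨ a ∈ p.2) : r p (toggle a p) := by
  by_cases has : a ∈ p.1
  · exact hmem p has
  · have hq : a ∈ (toggle a p).1 := by rw [toggle_of_notMem has]; exact mem_insert_self a _
    have := hmem _ hq
    rw [toggle_toggle ha] at this
    exact hr _ _ this

theorem union_toFinset_toggle (ha : a ∈ p.1 ∨ a ∈ p.2) :
    (toggle a p).1 ∪ (toggle a p).2.toFinset = p.1 ∪ p.2.toFinset := by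
  refine toggle_rel (r := fun p q => q.1 ∪ q.2.toFinset = p.1 ∪ p.2.toFinset)
    (fun _ _ => Eq.symm) (fun p has => ?_) ha
  rw [toggle_of_mem has]
  ext x
  by_cases hx : x = a
  · subst hx; simp [has]
  · simp [hx]

theorem card_toggle (ha : a ∈ p.1 ∨ a ∈ p.2) :
    #(toggle a p).1 + Multiset.card (toggle a p).2 = #p.1 + Multiset.card p.2 := by
  refine toggle_rel (r := fun p q => #q.1 + Multiset.card q.2 = #p.1 + Multiset.card p.2)
    (fun _ _ => Eq.symm) (fun p has => ?_) ha
  rw [toggle_of_mem has, Multiset.card_cons, ← card_erase_add_one has]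
  ring

theorem signedWeight_toggle (h : α → ℝ) (ha : a ∈ p.1 ∨ a ∈ p.2) :
    signedWeight h (toggle a p) = -signedWeight h p := by
  refine toggle_rel (r := fun p q => signedWeight h q = -signedWeight h p)
    (fun p q hpq => by simp [hpq]) (fun p has => ?_) ha
  rw [toggle_of_mem has, signedWeight, signedWeight, Multiset.map_cons, Multiset.prod_cons,
    ← mul_prod_erase p.1 h has, ← card_erase_add_one has, pow_succ]
  ring

theorem mem_toggle_fst {x : α} (hx : x ∈ (toggle a p).1) : x = a ∨ x ∈ p.1 := by
  unfold toggle at hx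
  split_ifs at hx
  · exact .inr (mem_of_mem_erase hx)
  · exact mem_insert.1 hx

theorem mem_toggle_snd {x : α} (hx : x ∈ (toggle a p).2) : x = a ∨ x ∈ p.2 := by
  unfold toggle at hx
  split_ifs at hx
  · exact Multiset.mem_cons.1 hx
  · exact .inr (Multiset.mem_of_mem_erase hx)

end Toggle

def oddSupport (p : Finset ℕ × Multiset ℕ) : Finset ℕ := (p.1 ∪ p.2.toFinset).filter Odd

def moveMaxOdd (p : Finset ℕ × Multiset ℕ) : Finset ℕ × Multiset ℕ :=
  if h : (oddSupport p).Nonempty then toggle ((oddSupport p).max' h) p else p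

theorem max'_oddSupport {p : Finset ℕ × Multiset ℕ} (hp : (oddSupport p).Nonempty) :
    Odd ((oddSupport p).max' hp) ∧
      ((oddSupport p).max' hp ∈ p.1 ∨ (oddSupport p).max' hp ∈ p.2) := by
  have := (oddSupport p).max'_mem hp
  simp only [oddSupport, mem_filter, mem_union, Multiset.mem_toFinset] at this
  exact this.symm

theorem oddSupport_moveMaxOdd (p : Finset ℕ × Multiset ℕ) :
    oddSupport (moveMaxOdd p) = oddSupport p := by
  unfold moveMaxOdd
  split_ifs with hp
  · rw [oddSupport, union_toFinset_toggle (max'_oddSupport hp).2, ← oddSupport]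
  · rfl

theorem moveMaxOdd_involutive : Involutive moveMaxOdd := by
  intro p
  by_cases hp : (oddSupport p).Nonempty
  · have hsupp := oddSupport_moveMaxOdd p
    have hq : (oddSupport (moveMaxOdd p)).Nonempty := hsupp ▸ hp
    have hmove : moveMaxOdd p = toggle ((oddSupport p).max' hp) p := dif_pos hp
    have hmove' : moveMaxOdd (moveMaxOdd p) =
        toggle ((oddSupport (moveMaxOdd p)).max' hq) (moveMaxOdd p) := dif_pos hq
    have hmax : (oddSupport (moveMaxOdd p)).max' hq = (oddSupport p).max' hp := by
      simp only [hsupp]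
    rw [hmove', hmax, hmove, toggle_toggle (max'_oddSupport hp).2]
  · have hfix : moveMaxOdd p = p := dif_neg hp
    rw [hfix, hfix]

theorem signedWeight_moveMaxOdd (h : ℕ → ℝ) {p : Finset ℕ × Multiset ℕ}
    (hp : (oddSupport p).Nonempty) : signedWeight h (moveMaxOdd p) = -signedWeight h p := by
  rw [moveMaxOdd, dif_pos hp, signedWeight_toggle h (max'_oddSupport hp).2]

theorem moveMaxOdd_mem_pairsOfSize {k : ℕ} {p : Finset ℕ × Multiset ℕ} (hp : p ∈ pairsOfSize k) :
    moveMaxOdd p ∈ pairsOfSize k := by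
  unfold moveMaxOdd
  split_ifs with hne
  · obtain ⟨hodd, ha⟩ := max'_oddSupport hne
    refine ⟨(card_toggle ha).trans hp.1, fun m hm => ?_, fun m hm => ?_⟩
    · rcases mem_toggle_fst hm with rfl | hm
      exacts [hodd.pos, hp.2.1 m hm]
    · rcases mem_toggle_snd hm with rfl | hm
      exacts [hodd, hp.2.2 m hm]
  · exact hp

theorem moveMaxOdd_mem_pairsOfSize_iff {k : ℕ} {p : Finset ℕ × Multiset ℕ} :
    moveMaxOdd p ∈ pairsOfSize k ↔ p ∈ pairsOfSize k :=
  ⟨fun hp => moveMaxOdd_involutive p ▸ moveMaxOdd_mem_pairsOfSize hp, moveMaxOdd_mem_pairsOfSize⟩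

def fixedPairs : Set (Finset ℕ × Multiset ℕ) := {p | oddSupport p = ∅}

theorem indicator_pairsOfSize_moveMaxOdd (h : ℕ → ℝ) (k : ℕ) {p : Finset ℕ × Multiset ℕ}
    (hp : (oddSupport p).Nonempty) :
    (pairsOfSize k).indicator (signedWeight h) (moveMaxOdd p) =
      -(pairsOfSize k).indicator (signedWeight h) p := by
  by_cases hc : p ∈ pairsOfSize k
  · rw [Set.indicator_of_mem (moveMaxOdd_mem_pairsOfSize_iff.2 hc), Set.indicator_of_mem hc,
      signedWeight_moveMaxOdd h hp]
  · rw [Set.indicator_of_notMem (mt moveMaxOdd_mem_pairsOfSize_iff.1 hc),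
      Set.indicator_of_notMem hc, neg_zero]

theorem tsum_indicator_pairsOfSize_eq_fixedPairs {h : ℕ → ℝ} {k : ℕ}
    (hF : Summable ((pairsOfSize k).indicator (signedWeight h))) :
    ∑' p, (pairsOfSize k).indicator (signedWeight h) p =
      ∑' p, (fixedPairs ∩ pairsOfSize k).indicator (signedWeight h) p := by
  have hmoving :
      ∑' p, fixedPairsᶜ.indicator ((pairsOfSize k).indicator (signedWeight h)) p = 0 := by
    refine tsum_eq_zero_of_involutive_neg moveMaxOdd_involutive fun p => ?_
    have hfixed : moveMaxOdd p ∈ fixedPairsᶜ ↔ p ∈ fixedPairsᶜ := by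
      simp only [fixedPairs, Set.mem_compl_iff, Set.mem_ofPred_eq, oddSupport_moveMaxOdd]
    by_cases hp : p ∈ fixedPairsᶜ
    · rw [Set.indicator_of_mem (hfixed.2 hp), Set.indicator_of_mem hp,
        indicator_pairsOfSize_moveMaxOdd h k (nonempty_iff_ne_empty.2 hp)]
    · rw [Set.indicator_of_notMem (mt hfixed.1 hp), Set.indicator_of_notMem hp, neg_zero]
  rw [← Set.indicator_self_add_compl fixedPairs ((pairsOfSize k).indicator (signedWeight h)),
    Pi.add_def, Summable.tsum_add (hF.indicator _) (hF.indicator _), hmoving, add_zero,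
    Set.indicator_indicator]

theorem mem_fixedPairs_inter_pairsOfSize {k : ℕ} {p : Finset ℕ × Multiset ℕ} :
    p ∈ fixedPairs ∩ pairsOfSize k ↔ ∃ T ∈ posFinsets k, (T.image (2 * ·), 0) = p := by
  have hdouble : Injective (2 * · : ℕ → ℕ) := mul_right_injective₀ two_ne_zero
  obtain ⟨s, M⟩ := p
  simp only [Set.mem_inter_iff, fixedPairs, pairsOfSize, posFinsets, oddSupport, Set.mem_ofPred_eq,
    filter_eq_empty_iff, mem_union, Multiset.mem_toFinset, Prod.mk.injEq]
  constructor
  · rintro ⟨heven, hcard, hpos, hodd⟩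
    obtain rfl : M = 0 :=
      Multiset.eq_zero_of_forall_notMem fun x hx => heven (.inr hx) (hodd x hx)
    have himage : ↑s ⊆ (2 * ·) '' {m | 0 < m} := fun m hm => by
      obtain ⟨r, rfl⟩ := Nat.not_odd_iff_even.1 (heven (.inl hm))
      exact ⟨r, show 0 < r by have := hpos _ hm; omega, by ring⟩
    obtain ⟨T, hTpos, rfl⟩ := subset_set_image_iff.1 himage
    refine ⟨T, ⟨?_, hTpos⟩, rfl, rfl⟩
    simpa [card_image_of_injective _ hdouble] using hcard
  · rintro ⟨T, ⟨hcard, hpos⟩, rfl, rfl⟩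
    simp only [mem_image, Multiset.notMem_zero, or_false, Multiset.card_zero, add_zero,
      card_image_of_injective _ hdouble, hcard, IsEmpty.forall_iff, implies_true, and_true,
      true_and, forall_exists_index, and_imp, forall_apply_eq_imp_iff₂]
    exact ⟨fun m _ => by simp [Nat.odd_iff], fun m hm => by have := hpos m hm; omega⟩

theorem tsum_indicator_fixedPairs (h : ℕ → ℝ) (k : ℕ) :
    ∑' p, (fixedPairs ∩ pairsOfSize k).indicator (signedWeight h) p =
      (-1) ^ k * posEsymm (fun m => h (2 * m)) k := by
  have hdouble : Injective (2 * · : ℕ → ℕ) := mul_right_injective₀ two_ne_zero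
  let g : posFinsets k → Finset ℕ × Multiset ℕ := fun T => (T.1.image (2 * ·), 0)
  have hg : Injective g := fun T T' hT =>
    Subtype.ext (image_injective hdouble (congrArg Prod.fst hT))
  rw [← hg.tsum_eq (Set.support_indicator_subset.trans fun p hp => ?_), posEsymm, ← tsum_mul_left]
  · refine tsum_congr fun T => ?_
    rw [Set.indicator_of_mem (mem_fixedPairs_inter_pairsOfSize.2 ⟨T, T.2, rfl⟩), signedWeight]
    simp [card_image_of_injective _ hdouble, prod_image hdouble.injOn, T.2.1]
  · obtain ⟨T, hT, rfl⟩ := mem_fixedPairs_inter_pairsOfSize.1 hp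
    exact ⟨⟨T, hT⟩, rfl⟩

theorem sum_alternating_posEsymm_mul_oddHsymm {h : ℕ → ℝ} (hh : Summable h) (k : ℕ) :
    ∑ j ∈ range (k + 1), (-1) ^ j * posEsymm h j * oddHsymm h (k - j) =
      (-1) ^ k * posEsymm (fun m => h (2 * m)) k := by
  have hsum := hasSum_indicator_pairsOfSize hh k
  rw [← hsum.tsum_eq, tsum_indicator_pairsOfSize_eq_fixedPairs hsum.summable,
    tsum_indicator_fixedPairs]

end MultTStar

theorem multTStar_repeat_gen_fun_general (n k : ℕ) (hn : 2 ≤ n) :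
    ∑ j ∈ Finset.range (k + 1),
        (-1 : ℝ) ^ j * multZeta (fun _ : Fin j => n) *
          multTStar (fun _ : Fin (k - j) => n) =
      (-1 : ℝ) ^ k * ((2 : ℝ) ^ (n * k))⁻¹ * multZeta (fun _ : Fin k => n) := by
  have hsum : Summable fun m : ℕ => 1 / (m : ℝ) ^ n :=
    Real.summable_one_div_nat_pow.2 (by omega)
  have hdouble : (fun m : ℕ => 1 / ((2 * m : ℕ) : ℝ) ^ n) =
      fun m : ℕ => ((2 : ℝ) ^ n)⁻¹ * (1 / (m : ℝ) ^ n) := by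
    funext m
    push_cast
    rw [mul_pow, one_div, one_div, mul_inv]
  simp only [MultTStar.multZeta_const_eq_posEsymm, MultTStar.multTStar_const_eq_oddHsymm]
  rw [MultTStar.sum_alternating_posEsymm_mul_oddHsymm hsum, hdouble,
    MultTStar.posEsymm_const_mul, inv_pow, ← pow_mul, mul_assoc]

/-- `Σ_{j=0}^{k} (−1)^j ζ({n}_j) t*({n}_{k−j}) = (−1)^k 2^{−nk} ζ({n}_k)`,
the coefficient form of the generating function identity
`1 + Σ t*({n}_k) x^(kn) = Z_n(e^(πi/n) x/2)/Z_n(e^(πi/n) x)`. -/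
theorem multTStar_repeat_gen_fun (n k : ℕ) (hn : 2 ≤ n) (hk : 1 ≤ k) :
    ∑ j ∈ Finset.range (k + 1),
        (-1 : ℝ) ^ j * multZeta (fun _ : Fin j => n) *
          multTStar (fun _ : Fin (k - j) => n) =
      (-1 : ℝ) ^ k * ((2 : ℝ) ^ (n * k))⁻¹ * multZeta (fun _ : Fin k => n) :=
  multTStar_repeat_gen_fun_general n k hn
end

section
/- For every integer n ≥ 2, Σ_{j=1}^{∞} t(n, {1}_{j−1}) = Σ_{s=0}^{∞} [ (1)_s (1)_s (1/2)_s^{n−1} ] / [ (3/2)_s^{n} · s! ], where (a)_s = a(a+1)···(a+s−1) is the Pochhammer symbol with (a)_0 = 1. (The right-hand side is the generalized hypergeometric value ₙ₊₁Fₙ(1, 1, {1/2}_{n−1}; {3/2}_n; 1).) -/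
open Polynomial

/-!
A tuple in `t(n, {1}_j)` is its largest entry `m = 2s + 1` followed by a `j`-element set of odd
numbers below `m`. Summing over all `j` therefore collapses the inner sums into
`∏_{i<s} (1 + 1/(2i+1)) = s! / (1/2)_s`, and both sides become `∑_s s! / ((1/2)_s (2s+1)^n)`.
The rearrangements are done in `ℝ≥0∞`; the bound `(s! / (1/2)_s)^2 ≤ 4s + 1` makes the
series converge for `n ≥ 2`, which lets the identity pass back to real sums.
-/

open Finset
open scoped ENNReal Nat

section StrictAntiTuples

variable {α : Type*} [LinearOrder α]

def strictAntiEquivPowersetCard (T : Finset α) (k : ℕ) :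
    {g : Fin k → α // StrictAnti g ∧ ∀ i, g i ∈ T} ≃ T.powersetCard k where
  toFun g := ⟨univ.image g.1, mem_powersetCard.2
    ⟨by simpa [image_subset_iff] using g.2.2,
      by rw [card_image_of_injective _ g.2.1.injective, card_fin]⟩⟩
  invFun S := ⟨fun i => S.1.orderEmbOfFin (mem_powersetCard.1 S.2).2 i.rev,
    fun _ _ h => (S.1.orderEmbOfFin _).strictMono (Fin.rev_lt_rev.2 h),
    fun _ => (mem_powersetCard.1 S.2).1 (orderEmbOfFin_mem _ _ _)⟩
  left_inv g := by
    have hrev := orderEmbOfFin_unique (s := univ.image g.1)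
      (by rw [card_image_of_injective _ g.2.1.injective, card_fin])
      (f := fun i => g.1 i.rev) (fun i => mem_image_of_mem _ (mem_univ _))
      (StrictAnti.comp g.2.1 Fin.rev_strictAnti)
    ext i
    simp [← hrev]
  right_inv S := by
    ext q
    simp only [mem_image, mem_univ, true_and]
    constructor
    · rintro ⟨i, rfl⟩
      exact orderEmbOfFin_mem _ _ _
    · intro hq
      rw [← Finset.mem_coe, ← range_orderEmbOfFin _ (mem_powersetCard.1 S.2).2] at hq
      obtain ⟨i, rfl⟩ := hq
      exact ⟨i.rev, by simp⟩

theorem tsum_prod_strictAnti (T : Finset α) (k : ℕ) (w : α → ℝ≥0∞) :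
    ∑' g : {g : Fin k → α // StrictAnti g ∧ ∀ i, g i ∈ T}, ∏ i, w (g.1 i) =
      ∑ S ∈ T.powersetCard k, ∏ q ∈ S, w q := by
  rw [← Finset.tsum_subtype, ← (strictAntiEquivPowersetCard T k).tsum_eq]
  exact tsum_congr fun g => (prod_image fun _ _ _ _ h => g.2.1.injective h).symm

theorem tsum_tsum_prod_strictAnti_eq_prod_one_add (T : Finset α) (w : α → ℝ≥0∞) :
    ∑' k, ∑' g : {g : Fin k → α // StrictAnti g ∧ ∀ i, g i ∈ T}, ∏ i, w (g.1 i) =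
      ∏ q ∈ T, (1 + w q) := by
  simp_rw [tsum_prod_strictAnti, prod_one_add, sum_powerset]
  exact tsum_eq_sum fun k hk => by
    rw [powersetCard_eq_empty.2 (by simpa using hk), sum_empty]

variable [LocallyFiniteOrderBot α] (p : α → Prop) [DecidablePred p]

def strictAntiConsEquiv (j : ℕ) :
    {f : Fin (j + 1) → α // StrictAnti f ∧ ∀ i, p (f i)} ≃
      Σ m : {m // p m},
        {g : Fin j → α // StrictAnti g ∧ ∀ i, g i ∈ (Iio m.1).filter p} where
  toFun f := ⟨⟨f.1 0, f.2.2 0⟩, Fin.tail f.1, f.2.1.comp_strictMono (Fin.strictMono_succ),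
    fun i => mem_filter.2 ⟨mem_Iio.2 (f.2.1 (Fin.succ_pos i)), f.2.2 _⟩⟩
  invFun x := ⟨Fin.cons x.1.1 x.2.1,
    -- a strictly antitone map is a strictly monotone map into `αᵒᵈ`
    (Fin.strictMono_cons (α := αᵒᵈ)).2
      ⟨fun i => show x.2.1 i < x.1.1 from mem_Iio.1 (mem_filter.1 (x.2.2.2 i)).1, x.2.2.1⟩,
    Fin.cases x.1.2 fun i => (mem_filter.1 (x.2.2.2 i)).2⟩
  left_inv f := Subtype.ext (Fin.cons_self_tail f.1)
  right_inv _ := rfl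

theorem tsum_tsum_mul_prod_strictAnti_cons (h w : α → ℝ≥0∞) :
    ∑' j, ∑' f : {f : Fin (j + 1) → α // StrictAnti f ∧ ∀ i, p (f i)},
        h (f.1 0) * ∏ i : Fin j, w (f.1 i.succ) =
      ∑' m : {m // p m}, h m * ∏ q ∈ (Iio m.1).filter p, (1 + w q) := by
  have hsplit : ∀ j, ∑' f : {f : Fin (j + 1) → α // StrictAnti f ∧ ∀ i, p (f i)},
      h (f.1 0) * ∏ i : Fin j, w (f.1 i.succ) =
      ∑' m : {m // p m}, h m *
        ∑' g : {g : Fin j → α // StrictAnti g ∧ ∀ i, g i ∈ (Iio m.1).filter p},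
          ∏ i, w (g.1 i) := fun j => by
    rw [← (strictAntiConsEquiv p j).symm.tsum_eq, ENNReal.tsum_sigma']
    exact tsum_congr fun m => by rw [← ENNReal.tsum_mul_left]; rfl
  simp_rw [hsplit]
  rw [ENNReal.tsum_comm]
  exact tsum_congr fun m => by
    rw [ENNReal.tsum_mul_left, tsum_tsum_prod_strictAnti_eq_prod_one_add]

end StrictAntiTuples

theorem ascPochhammer_eval_add_one_mul {S : Type*} [CommSemiring S] (s : ℕ) (a : S) :
    a * (ascPochhammer S s).eval (a + 1) = (ascPochhammer S s).eval a * (a + s) := by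
  rw [← ascPochhammer_succ_eval, ascPochhammer_succ_left]
  simp

theorem ascPochhammer_eval_three_halves (s : ℕ) :
    (ascPochhammer ℝ s).eval (3 / 2) = (2 * s + 1) * (ascPochhammer ℝ s).eval (1 / 2) := by
  have h := ascPochhammer_eval_add_one_mul s (1 / 2 : ℝ)
  norm_num at h
  linarith

noncomputable def doubleFactorialRatio (s : ℕ) : ℝ :=
  ∏ i ∈ range s, (1 + 1 / (2 * i + 1 : ℝ))

theorem doubleFactorialRatio_pos (s : ℕ) : 0 < doubleFactorialRatio s :=
  prod_pos fun _ _ => by positivity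

theorem doubleFactorialRatio_succ (s : ℕ) :
    doubleFactorialRatio (s + 1) = doubleFactorialRatio s * (1 + 1 / (2 * s + 1)) :=
  prod_range_succ _ _

theorem doubleFactorialRatio_mul_ascPochhammer_half (s : ℕ) :
    doubleFactorialRatio s * (ascPochhammer ℝ s).eval (1 / 2) = s ! := by
  induction s with
  | zero => simp [doubleFactorialRatio]
  | succ s ih =>
    rw [doubleFactorialRatio_succ, ascPochhammer_succ_eval, Nat.factorial_succ, Nat.cast_mul,
      ← ih]
    field_simp
    push_cast
    ring

theorem doubleFactorialRatio_sq_le (s : ℕ) : doubleFactorialRatio s ^ 2 ≤ 4 * s + 1 := by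
  induction s with
  | zero => simp [doubleFactorialRatio]
  | succ s ih =>
    have h : (1 + 1 / (2 * s + 1 : ℝ)) ^ 2 * (4 * s + 1) ≤ 4 * (s + 1 : ℕ) + 1 := by
      rw [one_add_div (by positivity), div_pow, div_mul_eq_mul_div, div_le_iff₀ (by positivity)]
      push_cast
      nlinarith
    calc doubleFactorialRatio (s + 1) ^ 2
        = (1 + 1 / (2 * s + 1 : ℝ)) ^ 2 * doubleFactorialRatio s ^ 2 := by
          rw [doubleFactorialRatio_succ]; ring
      _ ≤ (1 + 1 / (2 * s + 1 : ℝ)) ^ 2 * (4 * s + 1) := by gcongr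
      _ ≤ _ := h

theorem doubleFactorialRatio_le_two_mul_sqrt (s : ℕ) :
    doubleFactorialRatio s ≤ 2 * √((s + 1 : ℕ) : ℝ) := by
  rw [← pow_le_pow_iff_left₀ (doubleFactorialRatio_pos s).le (by positivity) two_ne_zero,
    mul_pow, Real.sq_sqrt (by positivity)]
  push_cast
  linarith [doubleFactorialRatio_sq_le s]

theorem hypergeometric_term_eq_doubleFactorialRatio_div {n : ℕ} (hn : n ≠ 0) (s : ℕ) :
    ((ascPochhammer ℝ s).eval 1 * (ascPochhammer ℝ s).eval 1 *
        (ascPochhammer ℝ s).eval (1 / 2) ^ (n - 1)) /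
      ((ascPochhammer ℝ s).eval (3 / 2) ^ n * s !) =
    doubleFactorialRatio s / (2 * s + 1) ^ n := by
  obtain ⟨m, rfl⟩ := Nat.exists_eq_add_one_of_ne_zero hn
  have hhalf : (ascPochhammer ℝ s).eval (1 / 2) ≠ 0 := (ascPochhammer_pos _ _ (by norm_num)).ne'
  rw [ascPochhammer_eval_one, ascPochhammer_eval_three_halves,
    ← doubleFactorialRatio_mul_ascPochhammer_half, Nat.add_sub_cancel, mul_pow]
  field_simp
  ring

theorem summable_doubleFactorialRatio_div_pow {n : ℕ} (hn : 2 ≤ n) :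
    Summable fun s : ℕ => doubleFactorialRatio s / (2 * s + 1) ^ n := by
  have hbound : ∀ s : ℕ, doubleFactorialRatio s / (2 * s + 1) ^ n ≤
      2 * ((s + 1 : ℕ) : ℝ) ^ (-(3 / 2) : ℝ) := by
    intro s
    have hsqrt : doubleFactorialRatio s ≤ 2 * ((s + 1 : ℕ) : ℝ) ^ (1 / 2 : ℝ) := by
      rw [← Real.sqrt_eq_rpow]
      exact doubleFactorialRatio_le_two_mul_sqrt s
    have hpow : ((s + 1 : ℕ) : ℝ) ^ (2 : ℝ) ≤ (2 * s + 1) ^ n := by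
      rw [Real.rpow_two]
      calc _ ≤ (2 * s + 1 : ℝ) ^ 2 := by gcongr; push_cast; linarith
        _ ≤ _ := pow_le_pow_right₀ (by linarith [s.cast_nonneg (α := ℝ)]) hn
    calc doubleFactorialRatio s / (2 * s + 1) ^ n
        ≤ 2 * ((s + 1 : ℕ) : ℝ) ^ (1 / 2 : ℝ) / ((s + 1 : ℕ) : ℝ) ^ (2 : ℝ) := by
          gcongr
      _ = _ := by
          rw [mul_div_assoc, ← Real.rpow_sub (by positivity)]
          norm_num
  refine Summable.of_nonneg_of_le
    (fun s => (div_pos (doubleFactorialRatio_pos s) (by positivity)).le) hbound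
    (Summable.mul_left 2 ?_)
  exact (summable_nat_add_iff 1).2 (Real.summable_nat_rpow.2 (by norm_num))

theorem tsum_eq_toReal_tsum_ofReal {ι : Type*} {f : ι → ℝ} (hf : ∀ i, 0 ≤ f i) :
    ∑' i, f i = (∑' i, ENNReal.ofReal (f i)).toReal := by
  lift f to ι → NNReal using hf
  rw [← NNReal.coe_tsum, NNReal.tsum_eq_toNNReal_tsum]
  simp [ENNReal.ofReal_coe_nnreal, ENNReal.coe_toNNReal_eq_toReal]

theorem tsum_subtype_odd {M : Type*} [AddCommMonoid M] [TopologicalSpace M] (f : ℕ → M) :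
    ∑' m : {m : ℕ // Odd m}, f m = ∑' s, f (2 * s + 1) :=
  (Equiv.ofBijective (fun s : ℕ => (⟨2 * s + 1, odd_two_mul_add_one s⟩ : {m : ℕ // Odd m}))
    ⟨fun _ _ h => by simpa using h, fun ⟨_, k, hk⟩ => ⟨k, Subtype.ext hk.symm⟩⟩).tsum_eq
    (fun m => f m) |>.symm

theorem filter_odd_Iio (s : ℕ) : (Iio (2 * s + 1)).filter Odd = (range s).image (2 * · + 1) := by
  ext q
  simp only [mem_filter, mem_Iio, mem_image, mem_range]
  constructor
  · rintro ⟨hq, k, rfl⟩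
    exact ⟨k, by omega, rfl⟩
  · rintro ⟨i, hi, rfl⟩
    exact ⟨by omega, i, rfl⟩

theorem tsum_tsum_ofReal_heightOne (n : ℕ) :
    ∑' j : ℕ, ∑' f : {f : Fin (j + 1) → ℕ // StrictAnti f ∧ ∀ i, Odd (f i)},
        ENNReal.ofReal (∏ i, 1 / (f.1 i : ℝ) ^ (if i = 0 then n else 1)) =
      ∑' s : ℕ, ENNReal.ofReal (doubleFactorialRatio s / (2 * s + 1) ^ n) := by
  have hsplit : ∀ j (f : Fin (j + 1) → ℕ),
      ENNReal.ofReal (∏ i, 1 / (f i : ℝ) ^ (if i = 0 then n else 1)) =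
        ENNReal.ofReal (1 / (f 0 : ℝ) ^ n) *
          ∏ i : Fin j, ENNReal.ofReal (1 / (f i.succ : ℝ)) := by
    intro j f
    rw [Fin.prod_univ_succ, ENNReal.ofReal_mul (by positivity),
      ENNReal.ofReal_prod_of_nonneg fun _ _ => by positivity]
    simp [Fin.succ_ne_zero]
  simp only [hsplit]
  rw [tsum_tsum_mul_prod_strictAnti_cons Odd (fun m : ℕ => ENNReal.ofReal (1 / (m : ℝ) ^ n))
    (fun q : ℕ => ENNReal.ofReal (1 / (q : ℝ))), tsum_subtype_odd (fun m : ℕ =>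
      ENNReal.ofReal (1 / (m : ℝ) ^ n) *
        ∏ q ∈ (Iio m).filter Odd, (1 + ENNReal.ofReal (1 / (q : ℝ))))]
  refine tsum_congr fun s => ?_
  rw [filter_odd_Iio, prod_image fun _ _ _ _ h => by simpa using h]
  conv_rhs => rw [doubleFactorialRatio, div_eq_mul_one_div, mul_comm,
    ENNReal.ofReal_mul (by positivity), ENNReal.ofReal_prod_of_nonneg fun _ _ => by positivity]
  congr 1
  · push_cast
    rfl
  · refine prod_congr rfl fun i _ => ?_
    rw [ENNReal.ofReal_add zero_le_one (by positivity), ENNReal.ofReal_one]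
    push_cast
    rfl

/-- The summand indexed by `j` is `t(n, {1}_j)`, the term with index `j + 1` in the paper. -/
theorem tHeightOne_row_sum (n : ℕ) (hn : 2 ≤ n) :
    ∑' j : ℕ, multT (fun s : Fin (j + 1) => if s = 0 then n else 1) =
      ∑' s : ℕ,
        ((ascPochhammer ℝ s).eval 1 * (ascPochhammer ℝ s).eval 1 *
            (ascPochhammer ℝ s).eval (1 / 2) ^ (n - 1)) /
          ((ascPochhammer ℝ s).eval (3 / 2) ^ n * Nat.factorial s) := by
  set A : ℕ → ℝ≥0∞ := fun j =>
    ∑' f : {f : Fin (j + 1) → ℕ // StrictAnti f ∧ ∀ i, Odd (f i)},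
      ENNReal.ofReal (∏ i, 1 / (f.1 i : ℝ) ^ (if i = 0 then n else 1))
  have hsum :
      ∑' j, A j = ∑' s : ℕ, ENNReal.ofReal (doubleFactorialRatio s / (2 * s + 1) ^ n) :=
    tsum_tsum_ofReal_heightOne n
  have hfin : ∑' j, A j ≠ ∞ :=
    hsum ▸ (summable_doubleFactorialRatio_div_pow hn).tsum_ofReal_ne_top
  calc _ = ∑' j, (A j).toReal :=
        tsum_congr fun j => tsum_eq_toReal_tsum_ofReal fun f => by positivity
    _ = (∑' j, A j).toReal :=
        (ENNReal.tsum_toReal_eq fun j => ne_top_of_le_ne_top hfin (ENNReal.le_tsum j)).symm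
    _ = ∑' s : ℕ, doubleFactorialRatio s / (2 * s + 1) ^ n := by
        rw [hsum, ← tsum_eq_toReal_tsum_ofReal fun s =>
          div_nonneg (doubleFactorialRatio_pos s).le (by positivity)]
    _ = _ := tsum_congr fun s => (hypergeometric_term_eq_doubleFactorialRatio_div (by omega) s).symm
end

section
/- For every integer n ≥ 2, Σ_{i=1}^{n−1} t(2i, 2n−2i) = (1/4)·t(2n). -/
open Finset Filter Topology

theorem hasSum_sub_comp_add_of_antitone {f : ℕ → ℝ} (hf : Antitone f)
    (hlim : Tendsto f atTop (𝓝 0)) (N : ℕ) :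
    HasSum (fun j ↦ f j - f (j + N)) (∑ j ∈ range N, f j) := by
  rw [hasSum_iff_tendsto_nat_of_nonneg fun j ↦ sub_nonneg.2 (hf (Nat.le_add_right j N))]
  have hpartial : ∀ M, ∑ j ∈ range M, (f j - f (j + N)) =
      ∑ j ∈ range N, f j - ∑ j ∈ range N, f (M + j) := by
    intro M
    have h := sum_range_add f M N
    rw [add_comm M N, sum_range_add] at h
    simp only [sum_sub_distrib, add_comm _ N]
    linarith
  have htail : Tendsto (fun M ↦ ∑ j ∈ range N, f (M + j)) atTop (𝓝 0) := by
    simpa using tendsto_finsetSum (range N) fun j _ ↦ hlim.comp (tendsto_add_atTop_nat j)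
  simpa [hpartial] using tendsto_const_nhds.sub htail

theorem hasSum_one_div_sub_one_div_add (N : ℕ) :
    HasSum (fun j : ℕ ↦ 1 / ((j : ℝ) + 1) - 1 / ((j : ℝ) + 1 + N)) (harmonic N : ℝ) := by
  have hf : Antitone fun j : ℕ ↦ 1 / ((j : ℝ) + 1) := fun i j hij ↦
    one_div_le_one_div_of_le (by positivity) (by gcongr)
  convert hasSum_sub_comp_add_of_antitone hf tendsto_one_div_add_atTop_nhds_zero_nat N using 1
  · ext j; push_cast; ring_nf
  · push_cast [harmonic]; simp

theorem hasSum_one_div_odd_sq_sub_sq (b : ℕ) :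
    HasSum (fun j : ℕ ↦ 1 / (((2 * (b + j + 1) + 1 : ℕ) : ℝ) ^ 2 - ((2 * b + 1 : ℕ) : ℝ) ^ 2))
      ((harmonic (2 * b + 1) : ℝ) / (4 * (2 * b + 1))) := by
  refine ((hasSum_one_div_sub_one_div_add (2 * b + 1)).div_const (4 * (2 * b + 1))).congr_fun
    fun j ↦ ?_
  have hD : ((2 * (b + j + 1) + 1 : ℕ) : ℝ) ^ 2 - ((2 * b + 1 : ℕ) : ℝ) ^ 2 =
      4 * ((j : ℝ) + 1) * (j + 1 + (2 * b + 1)) := by push_cast; ring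
  rw [hD]
  push_cast
  field_simp
  ring

theorem sum_range_one_div_odd_sq_sub_sq (a : ℕ) :
    ∑ c ∈ range a, 1 / (((2 * a + 1 : ℕ) : ℝ) ^ 2 - ((2 * c + 1 : ℕ) : ℝ) ^ 2) =
      (harmonic (2 * a) : ℝ) / (4 * (2 * a + 1)) := by
  have hfrac : ∀ c ∈ range a, 1 / (((2 * a + 1 : ℕ) : ℝ) ^ 2 - ((2 * c + 1 : ℕ) : ℝ) ^ 2) =
      (1 / (((a - 1 - c : ℕ) : ℝ) + 1) + 1 / (((a + c : ℕ) : ℝ) + 1)) / (4 * (2 * a + 1)) := by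
    intro c hc
    have hca := mem_range.1 hc
    have hrefl : ((a - 1 - c : ℕ) : ℝ) + 1 = a - c := by
      rw [Nat.cast_sub (by omega), Nat.cast_sub (by omega)]; push_cast; ring
    have hD : ((2 * a + 1 : ℕ) : ℝ) ^ 2 - ((2 * c + 1 : ℕ) : ℝ) ^ 2 =
        4 * ((a : ℝ) - c) * (a + c + 1) := by push_cast; ring
    have hac : (a : ℝ) - c ≠ 0 := sub_ne_zero.2 (by exact_mod_cast hca.ne')
    rw [hD, hrefl]
    push_cast
    field_simp
    ring
  have hH : (harmonic (2 * a) : ℝ) =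
      ∑ c ∈ range a, 1 / ((c : ℝ) + 1) + ∑ c ∈ range a, 1 / (((a + c : ℕ) : ℝ) + 1) := by
    rw [two_mul]
    push_cast [harmonic, sum_range_add]
    simp
  rw [sum_congr rfl hfrac, ← sum_div, sum_add_distrib,
    sum_range_reflect (fun c ↦ 1 / ((c : ℝ) + 1)), hH]

theorem HasSum.sum_range_of_prod {α : Type*} [AddCommGroup α] [TopologicalSpace α]
    [IsTopologicalAddGroup α] [RegularSpace α] {g : ℕ → ℕ → α} {s : α}
    (h : HasSum (fun x : ℕ × ℕ ↦ g (x.1 + x.2 + 1) x.1) s) :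
    HasSum (fun a ↦ ∑ c ∈ range a, g a c) s := by
  have hfiber (n : ℕ) : ∑ x ∈ antidiagonal n, g (x.1 + x.2 + 1) x.1 =
      ∑ c ∈ range (n + 1), g (n + 1) c := by
    rw [Nat.sum_antidiagonal_eq_sum_range_succ_mk]
    exact sum_congr rfl fun c hc ↦ by rw [Nat.add_sub_cancel' (by simpa [Nat.lt_succ_iff] using hc)]
  -- grouping the pairs `(c, j)` by `c + j = n` makes the fibre over `n` the terms with `a = n + 1`
  have hsigma := (HasAntidiagonal.sigmaAntidiagonalEquivProd.hasSum_iff.2 h).sigma fun n ↦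
    hasSum_fintype _
  rw [← hasSum_nat_add_iff' 1]
  simpa [sum_attach (antidiagonal _) (fun x ↦ g (x.1 + x.2 + 1) x.1), hfiber] using hsigma

theorem sub_mul_sum_Icc_pow_mul_pow {R : Type*} [CommRing R] (x y : R) (n : ℕ) :
    (x - y) * ∑ i ∈ Icc 1 (n - 1), x ^ i * y ^ (n - i) = x * y * (x ^ (n - 1) - y ^ (n - 1)) := by
  rcases n with _ | m
  · simp
  have hreindex : ∑ i ∈ Icc 1 m, x ^ i * y ^ (m + 1 - i) =
      x * y * ∑ i ∈ range m, x ^ i * y ^ (m - 1 - i) := by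
    rw [← Ico_add_one_right_eq_Icc, sum_Ico_eq_sum_range, mul_sum]
    refine sum_congr (by simp) fun i hi ↦ ?_
    have hi : i < m := by simpa using hi
    rw [show m + 1 - (1 + i) = (m - 1 - i) + 1 by omega]
    ring
  rw [Nat.add_sub_cancel, hreindex, ← geom_sum₂_mul]
  ring

theorem sum_Icc_one_div_pow_mul_one_div_pow {p q : ℝ} (hp : p ≠ 0) (hq : q ≠ 0)
    (hpq : p ^ 2 ≠ q ^ 2) (n : ℕ) :
    ∑ i ∈ Icc 1 (n - 1), 1 / p ^ (2 * i) * (1 / q ^ (2 * n - 2 * i)) =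
      (1 / q ^ (2 * n - 2) - 1 / p ^ (2 * n - 2)) / (p ^ 2 - q ^ 2) := by
  have key := sub_mul_sum_Icc_pow_mul_pow (1 / p ^ 2) (1 / q ^ 2) n
  simp only [one_div_pow, ← pow_mul] at key
  simp only [← Nat.mul_sub]
  rw [eq_div_iff (sub_ne_zero.2 hpq), show 2 * n - 2 = 2 * (n - 1) by omega]
  generalize ∑ i ∈ Icc 1 (n - 1), 1 / p ^ (2 * i) * (1 / q ^ (2 * (n - i))) = S at key ⊢
  have hP : p ^ (2 * (n - 1)) ≠ 0 := pow_ne_zero _ hp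
  have hQ : q ^ (2 * (n - 1)) ≠ 0 := pow_ne_zero _ hq
  generalize p ^ (2 * (n - 1)) = P at key hP ⊢
  generalize q ^ (2 * (n - 1)) = Q at key hQ ⊢
  field_simp at key ⊢
  linear_combination -key

theorem one_div_pow_le_one_div_sq {x y : ℝ} (hy : 1 ≤ y) (hyx : y ≤ x) {e : ℕ} (he : 2 ≤ e) :
    1 / x ^ e ≤ 1 / y ^ 2 :=
  (one_div_pow_le_one_div_pow_of_le (hy.trans hyx) he).trans
    (one_div_le_one_div_of_le (by positivity) (pow_le_pow_left₀ (by positivity) hyx 2))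

theorem summable_one_div_odd_sq_mul_one_div_succ_sq :
    Summable fun x : ℕ × ℕ ↦ 1 / ((2 * x.1 + 1 : ℕ) : ℝ) ^ 2 * (1 / ((x.2 + 1 : ℕ) : ℝ) ^ 2) := by
  have hsucc : Summable fun j : ℕ ↦ 1 / ((j + 1 : ℕ) : ℝ) ^ 2 :=
    (summable_nat_add_iff 1).2 (Real.summable_one_div_nat_pow.2 one_lt_two)
  have hodd : Summable fun b : ℕ ↦ 1 / ((2 * b + 1 : ℕ) : ℝ) ^ 2 :=
    hsucc.of_nonneg_of_le (fun _ ↦ by positivity) fun b ↦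
      one_div_pow_le_one_div_sq (Nat.one_le_cast.2 (by omega)) (Nat.cast_le.2 (by omega)) le_rfl
  exact hodd.mul_of_nonneg hsucc (fun _ ↦ by positivity) fun _ ↦ by positivity

theorem succ_sq_le_odd_sq_sub_sq (b j : ℕ) :
    ((j + 1 : ℕ) : ℝ) ^ 2 ≤ ((2 * (b + j + 1) + 1 : ℕ) : ℝ) ^ 2 - ((2 * b + 1 : ℕ) : ℝ) ^ 2 := by
  push_cast
  nlinarith [(b.cast_nonneg : (0 : ℝ) ≤ b), (j.cast_nonneg : (0 : ℝ) ≤ j)]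

theorem summable_div_odd_sq_sub_sq {w : ℕ → ℝ} {C : ℝ}
    (hw : ∀ b, |w b| ≤ C / ((2 * b + 1 : ℕ) : ℝ) ^ 2) {c : ℕ × ℕ → ℕ} (hc : ∀ x, x.1 ≤ c x) :
    Summable fun x : ℕ × ℕ ↦
      w (c x) / (((2 * (x.1 + x.2 + 1) + 1 : ℕ) : ℝ) ^ 2 - ((2 * x.1 + 1 : ℕ) : ℝ) ^ 2) := by
  have hC : 0 ≤ C := by simpa using (abs_nonneg _).trans (hw 0)
  refine Summable.of_norm_bounded
    (summable_one_div_odd_sq_mul_one_div_succ_sq.mul_left C) fun x ↦ ?_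
  have hD := succ_sq_le_odd_sq_sub_sq x.1 x.2
  have hwx : |w (c x)| ≤ C / ((2 * x.1 + 1 : ℕ) : ℝ) ^ 2 :=
    (hw (c x)).trans (div_le_div_of_nonneg_left hC (by positivity) (by gcongr; exact hc x))
  rw [norm_div, Real.norm_eq_abs, Real.norm_eq_abs, abs_of_pos (lt_of_lt_of_le (by positivity) hD),
    ← mul_assoc, ← div_eq_mul_one_div, ← div_eq_mul_one_div]
  gcongr

theorem tsum_sub_div_odd_sq_sub_sq {w : ℕ → ℝ} {C : ℝ}
    (hw : ∀ b, |w b| ≤ C / ((2 * b + 1 : ℕ) : ℝ) ^ 2) :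
    ∑' x : ℕ × ℕ, (w x.1 - w (x.1 + x.2 + 1)) /
        (((2 * (x.1 + x.2 + 1) + 1 : ℕ) : ℝ) ^ 2 - ((2 * x.1 + 1 : ℕ) : ℝ) ^ 2) =
      ∑' b, w b / (4 * ((2 * b + 1 : ℕ) : ℝ) ^ 2) := by
  have hsmall := summable_div_odd_sq_sub_sq hw (c := Prod.fst) fun _ ↦ le_rfl
  have hlarge := summable_div_odd_sq_sub_sq hw (c := fun x ↦ x.1 + x.2 + 1) fun _ ↦ by omega
  set D : ℕ × ℕ → ℝ := fun x ↦
    ((2 * (x.1 + x.2 + 1) + 1 : ℕ) : ℝ) ^ 2 - ((2 * x.1 + 1 : ℕ) : ℝ) ^ 2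
  have hsmall_fiber : HasSum (fun b ↦ w b * ((harmonic (2 * b + 1) : ℝ) / (4 * (2 * b + 1))))
      (∑' x, w x.1 / D x) :=
    hsmall.hasSum.prod_fiberwise fun b ↦ by
      simpa only [div_eq_mul_one_div (w b)] using (hasSum_one_div_odd_sq_sub_sq b).mul_left (w b)
  have hlarge_fiber : HasSum (fun a ↦ w a * ((harmonic (2 * a) : ℝ) / (4 * (2 * a + 1))))
      (∑' x, w (x.1 + x.2 + 1) / D x) := by
    have := hlarge.hasSum.sum_range_of_prod
      (g := fun a c ↦ w a / (((2 * a + 1 : ℕ) : ℝ) ^ 2 - ((2 * c + 1 : ℕ) : ℝ) ^ 2))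
    refine this.congr_fun fun a ↦ ?_
    simp only [← sum_range_one_div_odd_sq_sub_sq, mul_sum, mul_one_div]
  simp_rw [sub_div]
  rw [hsmall.tsum_sub hlarge, ← (hsmall_fiber.sub hlarge_fiber).tsum_eq]
  congr 1 with b
  rw [harmonic_succ]
  push_cast
  field_simp
  ring

def natEquivOddSingleton : ℕ ≃ {f : Fin 1 → ℕ // StrictAnti f ∧ ∀ i, Odd (f i)} where
  toFun k := ⟨![2 * k + 1], Subsingleton.strictAnti _, fun _ ↦ by simp⟩
  invFun f := f.1 0 / 2
  left_inv k := by simp; omega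
  right_inv := by
    rintro ⟨f, -, hodd⟩
    ext i
    fin_cases i
    simp [Nat.two_mul_div_two_add_one_of_odd (hodd 0)]

theorem multT_singleton (s : ℕ) : multT ![s] = ∑' k : ℕ, 1 / ((2 * k + 1 : ℕ) : ℝ) ^ s := by
  rw [multT, ← natEquivOddSingleton.tsum_eq]
  simp [natEquivOddSingleton]

def prodEquivOddPair : ℕ × ℕ ≃ {f : Fin 2 → ℕ // StrictAnti f ∧ ∀ i, Odd (f i)} where
  toFun x := ⟨![2 * (x.1 + x.2 + 1) + 1, 2 * x.1 + 1], by
    refine ⟨Fin.strictAnti_iff_succ_lt.2 fun i ↦ ?_, fun i ↦ ?_⟩ <;> fin_cases i <;> simp⟩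
  invFun f := (f.1 1 / 2, f.1 0 / 2 - f.1 1 / 2 - 1)
  left_inv x := Prod.ext (by simp; omega) (by simp; omega)
  right_inv := by
    rintro ⟨f, hanti, hodd⟩
    have h10 : f 1 < f 0 := hanti (show (0 : Fin 2) < 1 by decide)
    obtain ⟨r, hr⟩ := hodd 0
    obtain ⟨s, hs⟩ := hodd 1
    ext i
    fin_cases i <;> simp [hr, hs] <;> omega

theorem multT_pair (s t : ℕ) :
    multT ![s, t] = ∑' x : ℕ × ℕ,
      1 / ((2 * (x.1 + x.2 + 1) + 1 : ℕ) : ℝ) ^ s * (1 / ((2 * x.1 + 1 : ℕ) : ℝ) ^ t) := by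
  rw [multT, ← prodEquivOddPair.tsum_eq]
  simp [prodEquivOddPair, Fin.prod_univ_two, mul_comm]

theorem summable_one_div_odd_pow_mul_one_div_odd_pow {s t : ℕ} (hs : 2 ≤ s) (ht : 2 ≤ t) :
    Summable fun x : ℕ × ℕ ↦
      1 / ((2 * (x.1 + x.2 + 1) + 1 : ℕ) : ℝ) ^ s * (1 / ((2 * x.1 + 1 : ℕ) : ℝ) ^ t) := by
  refine summable_one_div_odd_sq_mul_one_div_succ_sq.of_nonneg_of_le (fun _ ↦ by positivity)
    fun x ↦ ?_
  rw [mul_comm]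
  exact mul_le_mul
    (one_div_pow_le_one_div_sq (Nat.one_le_cast.2 (by omega)) le_rfl ht)
    (one_div_pow_le_one_div_sq (Nat.one_le_cast.2 (by omega)) (Nat.cast_le.2 (by omega)) hs)
    (by positivity) (by positivity)

/-- `Σ_{i=1}^{n−1} t(2i, 2n−2i) = t(2n)/4` for `n ≥ 2`. -/
theorem multT_even_pair_sum (n : ℕ) (hn : 2 ≤ n) :
    ∑ i ∈ Finset.Icc 1 (n - 1), multT ![2 * i, 2 * n - 2 * i] =
      (1 / 4) * multT ![2 * n] := by
  have hw (b : ℕ) : |1 / ((2 * b + 1 : ℕ) : ℝ) ^ (2 * n - 2)| ≤ 1 / ((2 * b + 1 : ℕ) : ℝ) ^ 2 := by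
    rw [abs_of_nonneg (by positivity)]
    exact one_div_pow_le_one_div_sq (Nat.one_le_cast.2 (by omega)) le_rfl (by omega)
  simp only [multT_pair, multT_singleton]
  rw [← Summable.tsum_finsetSum fun i hi ↦
    have hi := mem_Icc.1 hi
    summable_one_div_odd_pow_mul_one_div_odd_pow (by omega) (by omega)]
  calc _ = ∑' x : ℕ × ℕ, (1 / ((2 * x.1 + 1 : ℕ) : ℝ) ^ (2 * n - 2) -
          1 / ((2 * (x.1 + x.2 + 1) + 1 : ℕ) : ℝ) ^ (2 * n - 2)) /
        (((2 * (x.1 + x.2 + 1) + 1 : ℕ) : ℝ) ^ 2 - ((2 * x.1 + 1 : ℕ) : ℝ) ^ 2) :=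
        tsum_congr fun x ↦ sum_Icc_one_div_pow_mul_one_div_pow (by positivity) (by positivity)
          (pow_lt_pow_left₀ (Nat.cast_lt.2 (by omega)) (by positivity) two_ne_zero).ne' n
    _ = ∑' b : ℕ, 1 / ((2 * b + 1 : ℕ) : ℝ) ^ (2 * n - 2) / (4 * ((2 * b + 1 : ℕ) : ℝ) ^ 2) :=
        tsum_sub_div_odd_sq_sub_sq hw
    _ = _ := by
        rw [← tsum_mul_left]
        refine tsum_congr fun b ↦ ?_
        rw [← pow_sub_mul_pow _ (show 2 ≤ 2 * n by omega)]
        field_simp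
end
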